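/- arXiv:1603.01911 — 5 statements merged into one kernel-verified Lean document; each statement's English description precedes it below -/
import Mathlib

section
/- Let σ be a Hanabi deck over n values and c colors with multiplicity r = 1 (every (value,color) pair occurs exactly once, so N = cn), and let h be a hand size. For each i ≤ N let f_i = max{ j ≤ N : k_j = k_i and a_j ≤ a_i }, let 𝓘 be the collection of intervals (i, f_i] with f_i > i, and let w = max over j ≤ N of the number of intervals of 𝓘 containing j. Then there exists a winning play sequence for σ with hand size h if and only if w ≤ h. -/
/-- A card is a pair (value, color). -/
abbrev Card : Type := ℕ × ℕ

/-- The card at (0-indexed) position `i` of deck `σ` (junk `(0,0)` when out of range). -/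
def nth (σ : List Card) (i : ℕ) : Card := σ.getD i (0, 0)

/-- A configuration: for each color, the highest value played so far in that color
(values `1,…,played k` of color `k` count as played), the hand (the set of positions
of the cards currently stored), and the set of positions of the cards played so far. -/
structure Config where
  played : ℕ → ℕ
  hand : Finset ℕ
  done : Finset ℕ

/-- `PlayFromHand σ cfg cfg'`: starting from `cfg`, play zero or more cards stored
in the hand (each playable card increments the progress of its color). -/
inductive PlayFromHand (σ : List Card) : Config → Config → Prop
  | refl (cfg : Config) : PlayFromHand σ cfg cfg
  | play (cfg cfg' : Config) (j : ℕ) (hj : j ∈ cfg.hand)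
      (hplay : cfg.played (nth σ j).2 + 1 = (nth σ j).1)
      (htail : PlayFromHand σ
        ⟨Function.update cfg.played (nth σ j).2 (nth σ j).1,
          cfg.hand.erase j, insert j cfg.done⟩ cfg') :
      PlayFromHand σ cfg cfg'

/-- `Step σ h i cfg cfg'`: processing the drawn card at position `i` with hand size `h`,
the player either discards it, stores it (the hand may never exceed `h` cards), or plays
it immediately (followed by playing any number of stored cards). -/
inductive Step (σ : List Card) (h : ℕ) (i : ℕ) : Config → Config → Prop
  | discard (cfg : Config) : Step σ h i cfg cfg
  | store (cfg : Config) (hsize : (insert i cfg.hand).card ≤ h) :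
      Step σ h i cfg ⟨cfg.played, insert i cfg.hand, cfg.done⟩
  | playNow (cfg cfg' : Config)
      (hplay : cfg.played (nth σ i).2 + 1 = (nth σ i).1)
      (htail : PlayFromHand σ
        ⟨Function.update cfg.played (nth σ i).2 (nth σ i).1,
          cfg.hand, insert i cfg.done⟩ cfg') :
      Step σ h i cfg cfg'

/-- The initial configuration: nothing played, empty hand. -/
def Config.initial : Config := ⟨fun _ => 0, ∅, ∅⟩

/-- A play sequence with hand size `h` on deck `σ`, starting from configuration `start`:
a sequence of configurations where the `i`-th step processes the card at position `i`. -/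
structure PlaySeq (σ : List Card) (h : ℕ) (start : Config) where
  cfgs : ℕ → Config
  init : cfgs 0 = start
  step : ∀ i < σ.length, Step σ h i (cfgs i) (cfgs (i + 1))

/-- The final configuration of a play sequence. -/
def PlaySeq.final {σ : List Card} {h : ℕ} {start : Config} (ps : PlaySeq σ h start) :
    Config := ps.cfgs σ.length

/-- A winning play sequence: for every color `k ∈ {1,…,c}`, all values `1,…,n` are played. -/
def PlaySeq.Winning {σ : List Card} {h : ℕ} {start : Config} (ps : PlaySeq σ h start)
    (n c : ℕ) : Prop :=
  ∀ k, 1 ≤ k → k ≤ c → n ≤ ps.final.played k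

/-- `σ` is a deck over `n` values and `c` colors. -/
def ValidDeck (σ : List Card) (n c : ℕ) : Prop :=
  ∀ cd ∈ σ, 1 ≤ cd.1 ∧ cd.1 ≤ n ∧ 1 ≤ cd.2 ∧ cd.2 ≤ c

/-- `lastLE σ i` is `f_i`: the largest position `j` (with `j < N`) holding a card of the
same color as the card at position `i` and of value at most that of the card at `i`. -/
def lastLE (σ : List Card) (i : ℕ) : ℕ :=
  ((Finset.range σ.length).filter
    (fun j => (nth σ j).2 = (nth σ i).2 ∧ (nth σ j).1 ≤ (nth σ i).1)).sup id

/-- `w`: the maximum, over positions `j`, of the number of intervals `(i, f_i]`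
(with `f_i > i`) containing `j`. -/
def overlapWidth (σ : List Card) : ℕ :=
  (Finset.range σ.length).sup
    (fun j => ((Finset.range σ.length).filter
      (fun i => i < j ∧ j ≤ lastLE σ i)).card)

/-!
If `f_i > i`, the card at position `i` cannot be played before position `f_i` is drawn: the card
there has the same color and, the deck having multiplicity one, a smaller value. As a winning
player plays every card, card `i` waits in the hand throughout `(i, f_i]`; so at any time `j`
the hand holds every `i` with `j ∈ (i, f_i]`, and `w ≤ h`. Conversely, the greedy player plays every card as soon as it is
playable and stores all others. At time `j` it holds exactly the drawn cards `i < j` whose color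
has not reached their value; some lower card of that color then lies at a position `≥ j`, so
`j ∈ (i, f_i]`, and the hand never holds more than `w` cards.
-/

open Finset Function

section Hanabi

variable {σ : List Card} {n c h : ℕ}

theorem nth_eq_getElem {i : ℕ} (hi : i < σ.length) : nth σ i = σ[i] :=
  List.getD_eq_getElem σ _ hi

theorem nth_mem {i : ℕ} (hi : i < σ.length) : nth σ i ∈ σ := by
  rw [nth_eq_getElem hi]
  exact List.getElem_mem hi

theorem ValidDeck.nth_bounds (hval : ValidDeck σ n c) {i : ℕ} (hi : i < σ.length) :
    1 ≤ (nth σ i).1 ∧ (nth σ i).1 ≤ n ∧ 1 ≤ (nth σ i).2 ∧ (nth σ i).2 ≤ c :=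
  hval _ (nth_mem hi)

theorem nth_inj (hnd : σ.Nodup) {i j : ℕ} (hi : i < σ.length) (hj : j < σ.length)
    (he : nth σ i = nth σ j) : i = j := by
  rw [nth_eq_getElem hi, nth_eq_getElem hj] at he
  exact (hnd.getElem_inj_iff).mp he

theorem nth_idxOf {cd : Card} (hcd : cd ∈ σ) : nth σ (σ.idxOf cd) = cd := by
  have hlt := List.idxOf_lt_length_iff.mpr hcd
  rw [nth_eq_getElem hlt, List.getElem_idxOf hlt]

theorem idxOf_nth (hnd : σ.Nodup) {i : ℕ} (hi : i < σ.length) : σ.idxOf (nth σ i) = i := by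
  rw [nth_eq_getElem hi, hnd.idxOf_getElem]

theorem nodup_of_count_eq_one (hval : ValidDeck σ n c)
    (huniq : ∀ a k, 1 ≤ a → a ≤ n → 1 ≤ k → k ≤ c → σ.count (a, k) = 1) :
    σ.Nodup := by
  refine List.nodup_iff_count_le_one.mpr fun cd => ?_
  by_cases hcd : cd ∈ σ
  · obtain ⟨h1, h2, h3, h4⟩ := hval cd hcd
    exact (huniq cd.1 cd.2 h1 h2 h3 h4).le
  · rw [List.count_eq_zero_of_not_mem hcd]
    exact zero_le_one

theorem le_lastLE {i q : ℕ} (hq : q < σ.length) (hcol : (nth σ q).2 = (nth σ i).2)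
    (hle : (nth σ q).1 ≤ (nth σ i).1) : q ≤ lastLE σ i :=
  le_sup (f := id) (mem_filter.mpr ⟨mem_range.mpr hq, hcol, hle⟩)

theorem lastLE_lt_length (hN : 0 < σ.length) (i : ℕ) : lastLE σ i < σ.length :=
  (Finset.sup_lt_iff hN).mpr fun _ hq => mem_range.mp (mem_filter.mp hq).1

def overlapSet (σ : List Card) (j : ℕ) : Finset ℕ :=
  (range σ.length).filter fun i => i < j ∧ j ≤ lastLE σ i

theorem overlapWidth_le_iff :
    overlapWidth σ ≤ h ↔ ∀ j ≤ σ.length, (overlapSet σ j).card ≤ h := by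
  refine Finset.sup_le_iff.trans ⟨fun hw j hj => ?_, fun hw j hj => hw j (mem_range.mp hj).le⟩
  rcases hj.lt_or_eq with hj | rfl
  · exact hw j (mem_range.mpr hj)
  · have hempty : overlapSet σ σ.length = ∅ := filter_eq_empty_iff.mpr fun i hi ⟨_, hle⟩ =>
      (lastLE_lt_length (Nat.zero_lt_of_lt (mem_range.mp hi)) i).not_ge hle
    simp [hempty]

/-- The invariant of a play sequence at time `j`, before the card at position `j` is drawn. -/
structure Config.Invariant (σ : List Card) (h j : ℕ) (cfg : Config) : Prop where
  hand_subset : cfg.hand ⊆ range j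
  done_subset : cfg.done ⊆ range j
  card_hand_le : cfg.hand.card ≤ h
  exists_done : ∀ k a, 1 ≤ a → a ≤ cfg.played k → ∃ p ∈ cfg.done, nth σ p = (a, k)
  le_played : ∀ p ∈ cfg.done, (nth σ p).1 ≤ cfg.played (nth σ p).2

theorem Config.Invariant.initial : Config.Invariant σ h 0 Config.initial where
  hand_subset := empty_subset _
  done_subset := empty_subset _
  card_hand_le := Nat.zero_le h
  exists_done _ _ ha1 ha := absurd (ha1.trans ha) (by simp [Config.initial])
  le_played _ hp := absurd hp (notMem_empty _)

theorem Config.Invariant.mono {j j' : ℕ} {cfg : Config} (hI : Config.Invariant σ h j cfg)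
    (hjj : j ≤ j') : Config.Invariant σ h j' cfg :=
  { hI with
    hand_subset := hI.hand_subset.trans (range_subset_range.mpr hjj)
    done_subset := hI.done_subset.trans (range_subset_range.mpr hjj) }

theorem Config.Invariant.play {j q : ℕ} {cfg : Config} {hand' : Finset ℕ}
    (hI : Config.Invariant σ h j cfg) (hq : q < j)
    (hplay : cfg.played (nth σ q).2 + 1 = (nth σ q).1) (hhand : hand' ⊆ cfg.hand) :
    Config.Invariant σ h j
      ⟨update cfg.played (nth σ q).2 (nth σ q).1, hand', insert q cfg.done⟩ := by
  have hmono : ∀ k, cfg.played k ≤ update cfg.played (nth σ q).2 (nth σ q).1 k := by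
    intro k
    rcases eq_or_ne k (nth σ q).2 with rfl | hk
    · rw [update_self]; omega
    · rw [update_of_ne hk]
  refine ⟨hhand.trans hI.hand_subset, insert_subset (mem_range.mpr hq) hI.done_subset,
    (card_le_card hhand).trans hI.card_hand_le, fun k a ha1 ha => ?_, fun p hp => ?_⟩
  · dsimp only at ha ⊢
    rcases eq_or_ne k (nth σ q).2 with rfl | hk
    · rw [update_self] at ha
      rcases ha.lt_or_eq with ha | rfl
      · obtain ⟨p, hp, hpe⟩ := hI.exists_done (nth σ q).2 a ha1 (by omega)
        exact ⟨p, mem_insert_of_mem hp, hpe⟩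
      · exact ⟨q, mem_insert_self q _, rfl⟩
    · obtain ⟨p, hp, hpe⟩ := hI.exists_done k a ha1 (by rwa [update_of_ne hk] at ha)
      exact ⟨p, mem_insert_of_mem hp, hpe⟩
  · dsimp only at hp ⊢
    rcases mem_insert.mp hp with rfl | hp
    · simp only [update_self, le_refl]
    · exact (hI.le_played p hp).trans (hmono _)

theorem PlayFromHand.invariant {j : ℕ} {c₁ c₂ : Config} (hpfh : PlayFromHand σ c₁ c₂)
    (hI : Config.Invariant σ h j c₁) : Config.Invariant σ h j c₂ := by
  induction hpfh with
  | refl => exact hI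
  | play cfg _ q hq hplay _ ih =>
    exact ih (hI.play (mem_range.mp (hI.hand_subset hq)) hplay (erase_subset q _))

theorem Step.invariant {i : ℕ} {c₁ c₂ : Config} (hst : Step σ h i c₁ c₂)
    (hI : Config.Invariant σ h i c₁) : Config.Invariant σ h (i + 1) c₂ := by
  cases hst with
  | discard => exact hI.mono i.le_succ
  | store hsize =>
    have hI' := hI.mono i.le_succ
    exact { hI' with
      hand_subset := insert_subset (self_mem_range_succ i) hI'.hand_subset
      card_hand_le := hsize }
  | playNow _ hplay htail =>
    exact htail.invariant ((hI.mono i.le_succ).play (Nat.lt_succ_self i) hplay subset_rfl)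

theorem PlaySeq.invariant (ps : PlaySeq σ h Config.initial) :
    ∀ j ≤ σ.length, Config.Invariant σ h j (ps.cfgs j)
  | 0, _ => by rw [ps.init]; exact Config.Invariant.initial
  | j + 1, hj => (ps.step j hj).invariant (ps.invariant j (Nat.le_of_succ_le hj))

theorem PlayFromHand.done_union_hand_subset {c₁ c₂ : Config}
    (hpfh : PlayFromHand σ c₁ c₂) : c₂.done ∪ c₂.hand ⊆ c₁.done ∪ c₁.hand := by
  induction hpfh with
  | refl => exact subset_rfl
  | play cfg _ q hq _ _ ih =>
    refine ih.trans (union_subset (insert_subset ?_ subset_union_left) ?_)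
    · exact mem_union_right _ hq
    · exact (erase_subset q _).trans subset_union_right

theorem Step.done_union_hand_subset {i : ℕ} {c₁ c₂ : Config} (hst : Step σ h i c₁ c₂) :
    c₂.done ∪ c₂.hand ⊆ insert i (c₁.done ∪ c₁.hand) := by
  cases hst with
  | discard => exact subset_insert i _
  | store =>
    intro p
    simp only [mem_union, mem_insert]
    tauto
  | playNow _ _ htail =>
    refine htail.done_union_hand_subset.trans ?_
    intro p
    simp only [mem_union, mem_insert]
    tauto

theorem PlaySeq.mem_done_union_hand_of_le (ps : PlaySeq σ h Config.initial) {i j t : ℕ}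
    (hij : i < j) (hjt : j ≤ t) (ht : t ≤ σ.length)
    (hmem : i ∈ (ps.cfgs t).done ∪ (ps.cfgs t).hand) :
    i ∈ (ps.cfgs j).done ∪ (ps.cfgs j).hand := by
  induction t, hjt using Nat.le_induction with
  | base => exact hmem
  | succ t hjt ih =>
    rcases mem_insert.mp ((ps.step t ht).done_union_hand_subset hmem) with rfl | hmem
    · omega
    · exact ih (Nat.le_of_succ_le ht) hmem

theorem PlaySeq.Winning.mem_final_done {ps : PlaySeq σ h Config.initial}
    (hwin : ps.Winning n c) (hval : ValidDeck σ n c) (hnd : σ.Nodup) {i : ℕ}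
    (hi : i < σ.length) :
    i ∈ ps.final.done := by
  have hI := ps.invariant σ.length le_rfl
  obtain ⟨ha1, han, hk1, hkc⟩ := ValidDeck.nth_bounds hval hi
  obtain ⟨p, hp, hpe⟩ := hI.exists_done _ _ ha1 (han.trans (hwin _ hk1 hkc))
  rwa [← nth_inj hnd (mem_range.mp (hI.done_subset hp)) hi hpe]

theorem Config.Invariant.lastLE_lt {j p : ℕ} {cfg : Config} (hI : Config.Invariant σ h j cfg)
    (hval : ValidDeck σ n c) (hnd : σ.Nodup) (hj : j ≤ σ.length) (hp : p ∈ cfg.done) :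
    lastLE σ p < j := by
  have hpj := mem_range.mp (hI.done_subset hp)
  refine (Finset.sup_lt_iff (Nat.zero_lt_of_lt hpj)).mpr fun q hq => ?_
  obtain ⟨hqN, hcol, hle⟩ := mem_filter.mp hq
  obtain ⟨p', hp', hpe⟩ := hI.exists_done _ _ (ValidDeck.nth_bounds hval (mem_range.mp hqN)).1
    (hle.trans (hI.le_played p hp))
  have hp'j := mem_range.mp (hI.done_subset hp')
  rw [← hcol] at hpe
  rwa [id, ← nth_inj hnd (by omega) (mem_range.mp hqN) hpe]

theorem overlapSet_subset_hand {ps : PlaySeq σ h Config.initial} (hwin : ps.Winning n c)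
    (hval : ValidDeck σ n c) (hnd : σ.Nodup) {j : ℕ} (hj : j ≤ σ.length) :
    overlapSet σ j ⊆ (ps.cfgs j).hand := by
  intro i hi
  obtain ⟨hiN, hij, hjle⟩ := mem_filter.mp hi
  have hmem := ps.mem_done_union_hand_of_le hij hj le_rfl
    (mem_union_left _ (hwin.mem_final_done hval hnd (mem_range.mp hiN)))
  refine (mem_union.mp hmem).resolve_left fun hdone => ?_
  exact ((ps.invariant j hj).lastLE_lt hval hnd hj hdone).not_ge hjle

theorem overlapWidth_le_of_winning {ps : PlaySeq σ h Config.initial} (hwin : ps.Winning n c)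
    (hval : ValidDeck σ n c) (hnd : σ.Nodup) : overlapWidth σ ≤ h :=
  overlapWidth_le_iff.mpr fun j hj =>
    (card_le_card (overlapSet_subset_hand hwin hval hnd hj)).trans
      (ps.invariant j hj).card_hand_le

def HasAllCards (σ : List Card) (n c : ℕ) : Prop :=
  ∀ a k, 1 ≤ a → a ≤ n → 1 ≤ k → k ≤ c → (a, k) ∈ σ

/-- The progress in color `k` of the greedy player at time `j`. -/
def greedyProgress (σ : List Card) (n j k : ℕ) : ℕ :=
  Nat.findGreatest (fun a => ∀ b ≤ a, 1 ≤ b → σ.idxOf (b, k) < j) n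

theorem greedyProgress_le {j k : ℕ} : greedyProgress σ n j k ≤ n :=
  Nat.findGreatest_le n

theorem idxOf_lt_of_le_greedyProgress {j k b : ℕ} (hb1 : 1 ≤ b)
    (hb : b ≤ greedyProgress σ n j k) : σ.idxOf (b, k) < j :=
  Nat.findGreatest_spec (P := fun a => ∀ b ≤ a, 1 ≤ b → σ.idxOf (b, k) < j) (m := 0)
    (Nat.zero_le n) (by omega) b hb hb1

theorem le_greedyProgress {j k a : ℕ} (han : a ≤ n)
    (h : ∀ b ≤ a, 1 ≤ b → σ.idxOf (b, k) < j) : a ≤ greedyProgress σ n j k :=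
  Nat.le_findGreatest (P := fun a => ∀ b ≤ a, 1 ≤ b → σ.idxOf (b, k) < j) han h

theorem greedyProgress_mono {j j' : ℕ} (hjj : j ≤ j') (k : ℕ) :
    greedyProgress σ n j k ≤ greedyProgress σ n j' k :=
  le_greedyProgress greedyProgress_le fun _ hb hb1 =>
    (idxOf_lt_of_le_greedyProgress hb1 hb).trans_le hjj

theorem greedyProgress_zero : greedyProgress σ n 0 = fun _ => 0 := by
  funext k
  by_contra hk
  exact Nat.not_lt_zero _
    (idxOf_lt_of_le_greedyProgress (Nat.one_le_iff_ne_zero.mpr hk) le_rfl)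

theorem lt_greedyProgress_iff {j k a : ℕ} (han : a < n) :
    a < greedyProgress σ n j k ↔ a ≤ greedyProgress σ n j k ∧ σ.idxOf (a + 1, k) < j := by
  refine ⟨fun ha => ⟨ha.le, idxOf_lt_of_le_greedyProgress (by omega) ha⟩,
    fun ⟨ha, hidx⟩ => le_greedyProgress han fun b hb hb1 => ?_⟩
  rcases hb.lt_or_eq with hb | rfl
  · exact idxOf_lt_of_le_greedyProgress (n := n) hb1 (by omega)
  · exact hidx

theorem nth_eq_of_greedyProgress_succ_ne {i k : ℕ} (hi : i < σ.length)
    (hne : greedyProgress σ n (i + 1) k ≠ greedyProgress σ n i k) :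
    nth σ i = (greedyProgress σ n i k + 1, k) := by
  set g := greedyProgress σ n i k
  have hlt : g < greedyProgress σ n (i + 1) k :=
    (greedyProgress_mono i.le_succ k).lt_of_ne' hne
  have hgn : g < n := hlt.trans_le greedyProgress_le
  have hsucc := ((lt_greedyProgress_iff hgn).mp hlt).2
  have hnot : ¬ σ.idxOf (g + 1, k) < i := fun h => lt_irrefl g
    ((lt_greedyProgress_iff hgn).mpr ⟨le_rfl, h⟩)
  have hidx : σ.idxOf (g + 1, k) = i := by omega
  rw [← hidx, nth_idxOf (List.idxOf_lt_length_iff.mp (hidx ▸ hi))]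

theorem greedyProgress_lt_nth (hval : ValidDeck σ n c) (hnd : σ.Nodup) {i : ℕ}
    (hi : i < σ.length) : greedyProgress σ n i (nth σ i).2 < (nth σ i).1 := by
  by_contra hle
  have := idxOf_lt_of_le_greedyProgress (ValidDeck.nth_bounds hval hi).1 (not_lt.mp hle)
  rw [idxOf_nth hnd hi] at this
  exact lt_irrefl i this

/-- The configuration at time `j` of a player with progress `g` who has stored every drawn card
that it has not played. -/
def greedyConfig (σ : List Card) (j : ℕ) (g : ℕ → ℕ) : Config where
  played := g
  hand := (range j).filter fun p => g (nth σ p).2 < (nth σ p).1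
  done := (range j).filter fun p => (nth σ p).1 ≤ g (nth σ p).2

theorem greedyConfig_zero : greedyConfig σ 0 (greedyProgress σ n 0) = Config.initial := by
  simp [greedyConfig, greedyProgress_zero, Config.initial]

theorem greedyConfig_succ {i : ℕ} {g : ℕ → ℕ} (hlt : g (nth σ i).2 < (nth σ i).1) :
    greedyConfig σ (i + 1) g =
      ⟨g, insert i (greedyConfig σ i g).hand, (greedyConfig σ i g).done⟩ := by
  simp [greedyConfig, range_add_one, filter_insert, hlt, not_le.mpr hlt]

theorem greedyConfig_play (hnd : σ.Nodup) {j q : ℕ} {g : ℕ → ℕ} (hj : j ≤ σ.length)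
    (hq : q < j) (hplay : g (nth σ q).2 + 1 = (nth σ q).1) :
    (⟨update (greedyConfig σ j g).played (nth σ q).2 (nth σ q).1,
        (greedyConfig σ j g).hand.erase q, insert q (greedyConfig σ j g).done⟩ : Config) =
      greedyConfig σ j (update g (nth σ q).2 (nth σ q).1) := by
  have heq : ∀ p < j, (nth σ p).2 = (nth σ q).2 → (nth σ p).1 = (nth σ q).1 → p = q :=
    fun p hp h2 h1 => nth_inj hnd (hp.trans_le hj) (hq.trans_le hj) (Prod.ext h1 h2)
  simp only [greedyConfig, Config.mk.injEq, true_and]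
  constructor <;> ext p <;>
    simp only [mem_erase, mem_insert, mem_filter, mem_range, update_apply]
  · constructor
    · rintro ⟨hpq, hpj, hlt⟩
      refine ⟨hpj, ?_⟩
      split_ifs with hcol
      · have hne : (nth σ p).1 ≠ (nth σ q).1 := fun h1 => hpq (heq p hpj hcol h1)
        rw [hcol] at hlt
        omega
      · exact hlt
    · rintro ⟨hpj, hlt⟩
      split_ifs at hlt with hcol
      · exact ⟨by rintro rfl; exact lt_irrefl _ hlt, hpj, by rw [hcol]; omega⟩
      · exact ⟨by rintro rfl; exact hcol rfl, hpj, hlt⟩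
  · constructor
    · rintro (rfl | ⟨hpj, hle⟩)
      · simp [hq]
      · refine ⟨hpj, ?_⟩
        split_ifs with hcol
        · rw [hcol] at hle; omega
        · exact hle
    · rintro ⟨hpj, hle⟩
      split_ifs at hle with hcol
      · rcases hle.lt_or_eq with hlt | h1
        · exact Or.inr ⟨hpj, by rw [hcol]; omega⟩
        · exact Or.inl (heq p hpj hcol h1)
      · exact Or.inr ⟨hpj, hle⟩

theorem playFromHand_greedyConfig (hnd : σ.Nodup) {j : ℕ} (hj : j ≤ σ.length) (k : ℕ) :
    ∀ (d : ℕ) (g : ℕ → ℕ), (∀ b, g k < b → b ≤ g k + d → σ.idxOf (b, k) < j) →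
      PlayFromHand σ (greedyConfig σ j g) (greedyConfig σ j (update g k (g k + d)))
  | 0, g, _ => by
    rw [add_zero, update_eq_self]
    exact PlayFromHand.refl _
  | d + 1, g, hrun => by
    set q := σ.idxOf (g k + 1, k)
    have hqj : q < j := hrun _ (Nat.lt_succ_self _) (by omega)
    have hqe : nth σ q = (g k + 1, k) :=
      nth_idxOf (List.idxOf_lt_length_iff.mp (hqj.trans_le hj))
    have hplay : g (nth σ q).2 + 1 = (nth σ q).1 := by rw [hqe]
    refine PlayFromHand.play _ _ q (mem_filter.mpr ⟨mem_range.mpr hqj, ?_⟩) hplay ?_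
    · rw [hqe]; exact Nat.lt_succ_self _
    · rw [greedyConfig_play hnd hj hqj hplay, hqe]
      have htail := playFromHand_greedyConfig hnd hj k d (update g k (g k + 1))
        fun b hb hbd => by
          rw [update_self] at hb hbd
          exact hrun b (by omega) (by omega)
      rwa [update_self, update_idem, add_right_comm] at htail

theorem greedyConfig_hand_subset_overlapSet (hval : ValidDeck σ n c)
    (hall : HasAllCards σ n c) {j : ℕ} (hj : j ≤ σ.length) :
    (greedyConfig σ j (greedyProgress σ n j)).hand ⊆ overlapSet σ j := by
  intro p hp
  obtain ⟨hpj, hlt⟩ := mem_filter.mp hp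
  have hpj := mem_range.mp hpj
  obtain ⟨-, hvn, hk1, hkc⟩ := ValidDeck.nth_bounds hval (hpj.trans_le hj)
  obtain ⟨b, hbv, hb1, hbj⟩ :
      ∃ b ≤ (nth σ p).1, 1 ≤ b ∧ j ≤ σ.idxOf (b, (nth σ p).2) := by
    by_contra! hdrawn
    exact (le_greedyProgress hvn hdrawn).not_gt hlt
  have hmem := hall b _ hb1 (hbv.trans hvn) hk1 hkc
  have hq := nth_idxOf hmem
  refine mem_filter.mpr ⟨mem_range.mpr (hpj.trans_le hj), hpj, hbj.trans ?_⟩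
  exact le_lastLE (List.idxOf_lt_length_iff.mpr hmem) (by rw [hq]) (by rwa [hq])

theorem step_greedyConfig_of_playable (hval : ValidDeck σ n c) (hnd : σ.Nodup) {i : ℕ}
    (hi : i < σ.length) (hplay : greedyProgress σ n i (nth σ i).2 + 1 = (nth σ i).1) :
    Step σ h i (greedyConfig σ i (greedyProgress σ n i))
      (greedyConfig σ (i + 1) (greedyProgress σ n (i + 1))) := by
  set g := greedyProgress σ n i
  set k := (nth σ i).2
  set g' := greedyProgress σ n (i + 1)
  have hlt : g k < (nth σ i).1 := greedyProgress_lt_nth hval hnd hi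
  have hg' : g' = update g k (g' k) := by
    funext k'
    rcases eq_or_ne k' k with rfl | hk
    · rw [update_self]
    · rw [update_of_ne hk]
      by_contra hne
      exact hk (congrArg Prod.snd (nth_eq_of_greedyProgress_succ_ne hi hne)).symm
  have hvg' : (nth σ i).1 ≤ g' k := by
    have hgn : g k < n := hlt.trans_le (ValidDeck.nth_bounds hval hi).2.1
    refine hplay ▸ (lt_greedyProgress_iff hgn).mpr ⟨greedyProgress_mono i.le_succ k, ?_⟩
    rw [show ((g k + 1, k) : Card) = nth σ i from Prod.ext hplay rfl, idxOf_nth hnd hi]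
    exact Nat.lt_succ_self i
  have hnotin : i ∉ (greedyConfig σ i g).hand := fun h =>
    lt_irrefl i (mem_range.mp (mem_filter.mp h).1)
  -- playing card `i` on arrival is storing it and then playing it from the hand
  have hstart := greedyConfig_play hnd (j := i + 1) hi (Nat.lt_succ_self i) hplay (g := g)
  rw [greedyConfig_succ hlt] at hstart
  rw [erase_insert hnotin] at hstart
  refine Step.playNow _ _ hplay ?_
  rw [show (greedyConfig σ i g).played = g from rfl, hstart]
  -- after it, the stored cards of color `k` with values up to `g' k` follow
  have hrun := playFromHand_greedyConfig hnd (j := i + 1) hi k (g' k - (nth σ i).1)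
    (update g k (nth σ i).1) fun b hb hbd => by
      rw [update_self] at hb hbd
      exact idxOf_lt_of_le_greedyProgress (by omega) (hbd.trans_eq (Nat.add_sub_cancel' hvg'))
  rwa [update_self, update_idem, Nat.add_sub_cancel' hvg', ← hg'] at hrun

theorem step_greedyConfig_of_not_playable (hval : ValidDeck σ n c) (hnd : σ.Nodup)
    (hall : HasAllCards σ n c) (hw : overlapWidth σ ≤ h) {i : ℕ} (hi : i < σ.length)
    (hplay : greedyProgress σ n i (nth σ i).2 + 1 ≠ (nth σ i).1) :
    Step σ h i (greedyConfig σ i (greedyProgress σ n i))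
      (greedyConfig σ (i + 1) (greedyProgress σ n (i + 1))) := by
  have hg : greedyProgress σ n (i + 1) = greedyProgress σ n i := by
    funext k
    by_contra hne
    have hcd := nth_eq_of_greedyProgress_succ_ne hi hne
    exact hplay (by rw [hcd])
  have hsucc := greedyConfig_succ (greedyProgress_lt_nth hval hnd hi)
  have hcard := (card_le_card (greedyConfig_hand_subset_overlapSet hval hall hi)).trans
    (overlapWidth_le_iff.mp hw (i + 1) hi)
  rw [hg, hsucc] at hcard ⊢
  exact Step.store _ hcard

theorem exists_winning_of_overlapWidth_le (hval : ValidDeck σ n c) (hnd : σ.Nodup)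
    (hall : HasAllCards σ n c) (hw : overlapWidth σ ≤ h) :
    ∃ ps : PlaySeq σ h Config.initial, ps.Winning n c := by
  refine ⟨⟨fun j => greedyConfig σ j (greedyProgress σ n j), greedyConfig_zero,
    fun i hi => ?_⟩, fun k hk1 hkc => ?_⟩
  · by_cases hplay : greedyProgress σ n i (nth σ i).2 + 1 = (nth σ i).1
    · exact step_greedyConfig_of_playable hval hnd hi hplay
    · exact step_greedyConfig_of_not_playable hval hnd hall hw hi hplay
  · exact le_greedyProgress le_rfl fun b hbn hb1 =>
      List.idxOf_lt_length_iff.mpr (hall b k hb1 hbn hk1 hkc)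

end Hanabi

theorem hanabi_multiplicity_one_iff_overlap_le_handsize_general
    (n c h : ℕ) (σ : List Card)
    (hval : ValidDeck σ n c)
    (huniq : ∀ a k, 1 ≤ a → a ≤ n → 1 ≤ k → k ≤ c → σ.count (a, k) = 1) :
    (∃ ps : PlaySeq σ h Config.initial, ps.Winning n c) ↔ overlapWidth σ ≤ h := by
  have hnd : σ.Nodup := nodup_of_count_eq_one hval huniq
  have hall : HasAllCards σ n c := fun a k ha1 han hk1 hkc =>
    List.count_pos_iff.mp (by rw [huniq a k ha1 han hk1 hkc]; exact one_pos)
  exact ⟨fun ⟨_, hwin⟩ => overlapWidth_le_of_winning hwin hval hnd,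
    exists_winning_of_overlapWidth_le hval hnd hall⟩

/-- For a deck with multiplicity `r = 1` (every (value, color) pair
occurs exactly once, so `N = c·n`), there is a winning play sequence with hand size `h`
if and only if `w ≤ h`. -/
theorem hanabi_multiplicity_one_iff_overlap_le_handsize
    (n c h : ℕ) (σ : List Card)
    (hval : ValidDeck σ n c)
    (hlen : σ.length = c * n)
    (huniq : ∀ a k, 1 ≤ a → a ≤ n → 1 ≤ k → k ≤ c → σ.count (a, k) = 1) :
    (∃ ps : PlaySeq σ h Config.initial, ps.Winning n c) ↔ overlapWidth σ ≤ h :=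
  hanabi_multiplicity_one_iff_overlap_le_handsize_general n c h σ hval huniq
end

section
/- Let σ be a Hanabi deck over n values with a single color (c = 1) and let h be a hand size. If the i-th card of σ is useless (for hand size h), then no winning play sequence for σ with hand size h plays the i-th card. -/
/-- The `i`-th card of a single-color deck `σ` is *useless* for hand size `h` (over `n`
values) if there are `h+1` values `w_1 < ⋯ < w_{h+1}`, all larger than the value of the
`i`-th card and at most `n`, such that no card with value among them appears after
position `i` in `σ`. -/
def Useless (σ : List Card) (h n i : ℕ) : Prop :=
  ∃ W : Finset ℕ, W.card = h + 1 ∧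
    (∀ x ∈ W, (nth σ i).1 < x ∧ x ≤ n) ∧
    (∀ j, i < j → j < σ.length → (nth σ j).1 ∉ W)

section HanabiAux

variable {σ : List Card} {h : ℕ}

private lemma played_le_update (f : ℕ → ℕ) (k0 v : ℕ) (hv : f k0 + 1 = v) (k : ℕ) :
    f k ≤ Function.update f k0 v k := by
  by_cases hk : k = k0
  · subst hk; rw [Function.update_self]; omega
  · rw [Function.update_of_ne hk]

private lemma PFH_played_le {c c' : Config} (hp : PlayFromHand σ c c') (k : ℕ) :
    c.played k ≤ c'.played k := by
  induction hp with
  | refl => exact le_rfl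
  | play cfg cfg' j hj hplay htail ih =>
    exact le_trans (played_le_update _ _ _ hplay k) ih

private lemma PFH_hand_subset {c c' : Config} (hp : PlayFromHand σ c c') :
    c'.hand ⊆ c.hand := by
  induction hp with
  | refl => exact subset_rfl
  | play cfg cfg' j hj hplay htail ih =>
    exact ih.trans (Finset.erase_subset _ _)

private lemma PFH_union_subset {c c' : Config} (hp : PlayFromHand σ c c') :
    c'.hand ∪ c'.done ⊆ c.hand ∪ c.done := by
  induction hp with
  | refl => exact subset_rfl
  | play cfg cfg' j hj hplay htail ih =>
    refine ih.trans ?_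
    intro x hx
    simp only [Finset.mem_union, Finset.mem_erase, Finset.mem_insert] at hx ⊢
    rcases hx with ⟨_, hx⟩ | (rfl | hx)
    · exact Or.inl hx
    · exact Or.inl hj
    · exact Or.inr hx

private lemma PFH_dval {c c' : Config} (hp : PlayFromHand σ c c')
    (hd : ∀ j ∈ c.done, (nth σ j).1 ≤ c.played (nth σ j).2) :
    ∀ j ∈ c'.done, (nth σ j).1 ≤ c'.played (nth σ j).2 := by
  induction hp with
  | refl => exact hd
  | play cfg cfg' j hj hplay htail ih =>
    apply ih
    intro j' hj'
    simp only [Finset.mem_insert] at hj'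
    rcases hj' with rfl | hj'
    · simp [Function.update_self]
    · exact (hd j' hj').trans (played_le_update _ _ _ hplay _)

private lemma PFH_dwit {c c' : Config} (hp : PlayFromHand σ c c')
    (hw : ∀ k v, 1 ≤ v → v ≤ c.played k →
      ∃ j ∈ c.done, (nth σ j).1 = v ∧ (nth σ j).2 = k) :
    ∀ k v, 1 ≤ v → v ≤ c'.played k →
      ∃ j ∈ c'.done, (nth σ j).1 = v ∧ (nth σ j).2 = k := by
  induction hp with
  | refl => exact hw
  | play cfg cfg' j hj hplay htail ih =>
    apply ih
    intro k v hv hvle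
    by_cases hk : k = (nth σ j).2
    · subst hk
      simp only [Function.update_self] at hvle
      rcases Nat.lt_or_ge v (nth σ j).1 with hlt | hge
      · obtain ⟨j', hj'd, hj'v⟩ := hw (nth σ j).2 v hv (by omega)
        exact ⟨j', Finset.mem_insert_of_mem hj'd, hj'v⟩
      · have : v = (nth σ j).1 := le_antisymm hvle hge
        exact ⟨j, Finset.mem_insert_self _ _, this.symm, rfl⟩
    · simp only [Function.update_of_ne hk] at hvle
      obtain ⟨j', hj'd, hj'v⟩ := hw _ v hv hvle
      exact ⟨j', Finset.mem_insert_of_mem hj'd, hj'v⟩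

private lemma PFH_first_play {c c' : Config} {i : ℕ} (hp : PlayFromHand σ c c')
    (hni : i ∉ c.done) (hmem : i ∈ c'.done) :
    c.played (nth σ i).2 < (nth σ i).1 := by
  induction hp with
  | refl => exact absurd hmem hni
  | play cfg cfg' j hj hplay htail ih =>
    by_cases hij : i = j
    · subst hij; omega
    · have h1 : i ∉ insert j cfg.done := by
        simp only [Finset.mem_insert]; tauto
      have := ih h1 hmem
      exact lt_of_le_of_lt (played_le_update _ _ _ hplay _) this

private lemma Step_played_le {c c' : Config} {t : ℕ} (hs : Step σ h t c c') (k : ℕ) :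
    c.played k ≤ c'.played k := by
  cases hs with
  | discard => exact le_rfl
  | store hsize => exact le_rfl
  | playNow cfg' hplay htail =>
    exact le_trans (played_le_update _ _ _ hplay k) (PFH_played_le htail k)

private lemma Step_hand_card {c c' : Config} {t : ℕ} (hs : Step σ h t c c')
    (hc : c.hand.card ≤ h) : c'.hand.card ≤ h := by
  cases hs with
  | discard => exact hc
  | store hsize => exact hsize
  | playNow cfg' hplay htail =>
    exact le_trans (Finset.card_le_card (PFH_hand_subset htail)) hc

private lemma Step_union_subset {c c' : Config} {t : ℕ} (hs : Step σ h t c c') :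
    c'.hand ∪ c'.done ⊆ insert t (c.hand ∪ c.done) := by
  cases hs with
  | discard => exact Finset.subset_insert _ _
  | store hsize =>
    intro x hx
    simp only [Finset.mem_union, Finset.mem_insert] at hx ⊢
    tauto
  | playNow cfg' hplay htail =>
    refine (PFH_union_subset htail).trans ?_
    intro x hx
    simp only [Finset.mem_union, Finset.mem_insert] at hx ⊢
    tauto

private lemma Step_dval {c c' : Config} {t : ℕ} (hs : Step σ h t c c')
    (hd : ∀ j ∈ c.done, (nth σ j).1 ≤ c.played (nth σ j).2) :
    ∀ j ∈ c'.done, (nth σ j).1 ≤ c'.played (nth σ j).2 := by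
  cases hs with
  | discard => exact hd
  | store hsize => exact hd
  | playNow cfg' hplay htail =>
    apply PFH_dval htail
    intro j' hj'
    simp only [Finset.mem_insert] at hj'
    rcases hj' with rfl | hj'
    · simp [Function.update_self]
    · exact (hd j' hj').trans (played_le_update _ _ _ hplay _)

private lemma Step_dwit {c c' : Config} {t : ℕ} (hs : Step σ h t c c')
    (hw : ∀ k v, 1 ≤ v → v ≤ c.played k →
      ∃ j ∈ c.done, (nth σ j).1 = v ∧ (nth σ j).2 = k) :
    ∀ k v, 1 ≤ v → v ≤ c'.played k →
      ∃ j ∈ c'.done, (nth σ j).1 = v ∧ (nth σ j).2 = k := by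
  cases hs with
  | discard => exact hw
  | store hsize => exact hw
  | playNow cfg' hplay htail =>
    apply PFH_dwit htail
    intro k v hv hvle
    by_cases hk : k = (nth σ t).2
    · subst hk
      simp only [Function.update_self] at hvle
      rcases Nat.lt_or_ge v (nth σ t).1 with hlt | hge
      · obtain ⟨j', hj'd, hj'v⟩ := hw (nth σ t).2 v hv (by omega)
        exact ⟨j', Finset.mem_insert_of_mem hj'd, hj'v⟩
      · have : v = (nth σ t).1 := le_antisymm hvle hge
        exact ⟨t, Finset.mem_insert_self _ _, this.symm, rfl⟩
    · simp only [Function.update_of_ne hk] at hvle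
      obtain ⟨j', hj'd, hj'v⟩ := hw _ v hv hvle
      exact ⟨j', Finset.mem_insert_of_mem hj'd, hj'v⟩

private lemma Step_first_play {c c' : Config} {t i : ℕ} (hs : Step σ h t c c')
    (hni : i ∉ c.done) (hmem : i ∈ c'.done) :
    c.played (nth σ i).2 < (nth σ i).1 := by
  cases hs with
  | discard => exact absurd hmem hni
  | store hsize => exact absurd hmem hni
  | playNow cfg' hplay htail =>
    by_cases hit : i = t
    · subst hit; omega
    · have h1 : i ∉ insert t c.done := by
        simp only [Finset.mem_insert]; tauto
      have := PFH_first_play htail h1 hmem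
      exact lt_of_le_of_lt (played_le_update _ _ _ hplay _) this

end HanabiAux

section HanabiSeq

variable {σ : List Card} {h : ℕ}

private lemma seq_hand_card (ps : PlaySeq σ h Config.initial) :
    ∀ t, t ≤ σ.length → (ps.cfgs t).hand.card ≤ h := by
  intro t
  induction t with
  | zero => intro _; rw [ps.init]; simp [Config.initial]
  | succ t ih =>
    intro ht
    exact Step_hand_card (ps.step t (by omega)) (ih (by omega))

private lemma seq_bound (ps : PlaySeq σ h Config.initial) :
    ∀ t, t ≤ σ.length → ∀ j ∈ (ps.cfgs t).hand ∪ (ps.cfgs t).done, j < t := by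
  intro t
  induction t with
  | zero => intro _ j hj; rw [ps.init] at hj; simp [Config.initial] at hj
  | succ t ih =>
    intro ht j hj
    have := Step_union_subset (ps.step t (by omega)) hj
    simp only [Finset.mem_insert] at this
    rcases this with rfl | hmem
    · omega
    · exact lt_trans (ih (by omega) j hmem) (Nat.lt_succ_self t)

private lemma seq_dval (ps : PlaySeq σ h Config.initial) :
    ∀ t, t ≤ σ.length → ∀ j ∈ (ps.cfgs t).done,
      (nth σ j).1 ≤ (ps.cfgs t).played (nth σ j).2 := by
  intro t
  induction t with
  | zero => intro _ j hj; rw [ps.init] at hj; simp [Config.initial] at hj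
  | succ t ih =>
    intro ht
    exact Step_dval (ps.step t (by omega)) (ih (by omega))

private lemma seq_dwit (ps : PlaySeq σ h Config.initial) :
    ∀ t, t ≤ σ.length → ∀ k v, 1 ≤ v → v ≤ (ps.cfgs t).played k →
      ∃ j ∈ (ps.cfgs t).done, (nth σ j).1 = v ∧ (nth σ j).2 = k := by
  intro t
  induction t with
  | zero =>
    intro _ k v hv hvle
    rw [ps.init] at hvle
    simp [Config.initial] at hvle
    omega
  | succ t ih =>
    intro ht
    exact Step_dwit (ps.step t (by omega)) (ih (by omega))

private lemma seq_played_mono (ps : PlaySeq σ h Config.initial) {s : ℕ} :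
    ∀ t, s ≤ t → t ≤ σ.length → ∀ k, (ps.cfgs s).played k ≤ (ps.cfgs t).played k := by
  intro t
  induction t with
  | zero =>
    intro hs _ k
    have hs0 : s = 0 := by omega
    rw [hs0]
  | succ t ih =>
    intro hs ht k
    rcases Nat.lt_or_ge s (t + 1) with hlt | hge
    · exact le_trans (ih (by omega) (by omega) k)
        (Step_played_le (ps.step t (by omega)) k)
    · have hseq : s = t + 1 := by omega
      rw [hseq]

private lemma seq_persist (ps : PlaySeq σ h Config.initial) {i : ℕ} :
    ∀ t, i ≤ t → t ≤ σ.length → ∀ j < i,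
      j ∈ (ps.cfgs t).hand ∪ (ps.cfgs t).done →
      j ∈ (ps.cfgs i).hand ∪ (ps.cfgs i).done := by
  intro t
  induction t with
  | zero =>
    intro hit _ j _ hj
    have hi0 : i = 0 := by omega
    rw [hi0]
    exact hj
  | succ t ih =>
    intro hit ht j hji hj
    rcases Nat.lt_or_ge i (t + 1) with hlt | hge
    · have := Step_union_subset (ps.step t (by omega)) hj
      simp only [Finset.mem_insert] at this
      rcases this with rfl | hmem
      · omega
      · exact ih (by omega) (by omega) j hji hmem
    · have hieq : i = t + 1 := by omega
      rw [hieq]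
      exact hj

private lemma seq_low (ps : PlaySeq σ h Config.initial) {i : ℕ} :
    ∀ t, i ≤ t → t ≤ σ.length → i ∈ (ps.cfgs t).done →
      (ps.cfgs i).played (nth σ i).2 < (nth σ i).1 := by
  intro t
  induction t with
  | zero =>
    intro hit _ hmem
    exact absurd (seq_bound ps 0 (by omega) i (Finset.mem_union_right _ hmem)) (by omega)
  | succ t ih =>
    intro hit ht hmem
    rcases Nat.lt_or_ge i (t + 1) with hlt | hge
    · by_cases hd : i ∈ (ps.cfgs t).done
      · exact ih (by omega) (by omega) hd
      · have h1 := Step_first_play (ps.step t (by omega)) hd hmem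
        exact lt_of_le_of_lt
          (seq_played_mono ps t (by omega) (by omega) (nth σ i).2) h1
    · exact absurd (seq_bound ps (t + 1) ht i (Finset.mem_union_right _ hmem)) (by omega)

end HanabiSeq

/-- In the single-color case, a useless card is never played in a
winning play sequence. -/
theorem useless_card_not_played_in_winning
    (n h : ℕ) (σ : List Card) (hval : ValidDeck σ n 1)
    (i : ℕ) (hi : i < σ.length) (hu : Useless σ h n i) :
    ∀ ps : PlaySeq σ h Config.initial, ps.Winning n 1 → i ∉ ps.final.done := by
  intro ps hwin hdone
  obtain ⟨W, hWcard, hWbd, hWlast⟩ := hu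
  have hmemσ : nth σ i ∈ σ := by
    have hx : nth σ i = σ[i] := List.getD_eq_getElem σ _ hi
    rw [hx]
    exact List.getElem_mem hi
  obtain ⟨ha1, han, hk1, hk2⟩ := hval _ hmemσ
  have hcol : (nth σ i).2 = 1 := le_antisymm hk2 hk1
  have hlow : (ps.cfgs i).played 1 < (nth σ i).1 := by
    have := seq_low ps σ.length hi.le le_rfl hdone
    rwa [hcol] at this
  have hexists : ∀ w : ℕ, ∃ j, w ∈ W → j ∈ (ps.cfgs i).hand ∧ (nth σ j).1 = w := by
    intro w
    by_cases hw : w ∈ W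
    · obtain ⟨hwa, hwn⟩ := hWbd w hw
      have hw1 : 1 ≤ w := by omega
      have hwp : w ≤ ps.final.played 1 := le_trans hwn (hwin 1 le_rfl le_rfl)
      obtain ⟨j, hjdone, hjv, hjc⟩ := seq_dwit ps σ.length le_rfl 1 w hw1 hwp
      have hjlen : j < σ.length :=
        seq_bound ps σ.length le_rfl j (Finset.mem_union_right _ hjdone)
      have hji : ¬ i < j := fun hij => hWlast j hij hjlen (hjv ▸ hw)
      have hjne : j ≠ i := by
        intro he; rw [he] at hjv; omega
      have hjlt : j < i := by omega
      have hmem_i : j ∈ (ps.cfgs i).hand ∪ (ps.cfgs i).done :=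
        seq_persist ps σ.length hi.le le_rfl j hjlt (Finset.mem_union_right _ hjdone)
      rcases Finset.mem_union.mp hmem_i with hh | hd
      · exact ⟨j, fun _ => ⟨hh, hjv⟩⟩
      · exfalso
        have := seq_dval ps i hi.le j hd
        rw [hjv, hjc] at this
        omega
    · exact ⟨0, fun hmem => absurd hmem hw⟩
  choose f hf using hexists
  have hcard1 : W.card ≤ (ps.cfgs i).hand.card := by
    apply Finset.card_le_card_of_injOn f (fun w hw => (hf w hw).1)
    intro w hw w' hw' he
    rw [← (hf w hw).2, ← (hf w' hw').2, he]
  have hcard2 := seq_hand_card ps i hi.le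
  omega
end

section
/- Let σ be a Hanabi deck over n values with a single color (c = 1) and let h be a hand size. If σ' is the sequence obtained from σ by deleting one card that is useless in σ (for hand size h), then σ has a winning play sequence with hand size h if and only if σ' has a winning play sequence with hand size h. -/
namespace HanabiAux

lemma nth_eraseIdx (σ : List Card) (i j : ℕ) :
    nth (σ.eraseIdx i) j = if j < i then nth σ j else nth σ (j+1) := by
  unfold nth
  rw [List.getD_eq_getElem?_getD, List.getElem?_eraseIdx]
  split <;> rw [List.getD_eq_getElem?_getD]

lemma nth_mem {σ : List Card} {p : ℕ} (hp : p < σ.length) : nth σ p ∈ σ := by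
  unfold nth
  rw [List.getD_eq_getElem?_getD, List.getElem?_eq_getElem hp]
  exact List.getElem_mem _

lemma color_one {σ : List Card} {n : ℕ} (hval : ValidDeck σ n 1) {p : ℕ}
    (hp : p < σ.length) : (nth σ p).2 = 1 := by
  have := hval _ (nth_mem hp); omega

lemma value_pos {σ : List Card} {n : ℕ} (hval : ValidDeck σ n 1) {p : ℕ}
    (hp : p < σ.length) : 1 ≤ (nth σ p).1 := (hval _ (nth_mem hp)).1

inductive Reach (σ : List Card) (h : ℕ) : ℕ → Config → ℕ → Config → Prop
  | refl (t : ℕ) (cfg : Config) : Reach σ h t cfg t cfg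
  | discard (t : ℕ) (cfg : Config) (t' : ℕ) (cfg' : Config) (ht : t < σ.length)
      (tail : Reach σ h (t+1) cfg t' cfg') : Reach σ h t cfg t' cfg'
  | store (t : ℕ) (cfg : Config) (t' : ℕ) (cfg' : Config) (ht : t < σ.length)
      (hsz : (insert t cfg.hand).card ≤ h)
      (tail : Reach σ h (t+1) ⟨cfg.played, insert t cfg.hand, cfg.done⟩ t' cfg') :
      Reach σ h t cfg t' cfg'
  | playNow (t : ℕ) (cfg : Config) (t' : ℕ) (cfg' : Config) (ht : t < σ.length)
      (hplay : cfg.played (nth σ t).2 + 1 = (nth σ t).1)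
      (tail : Reach σ h (t+1)
        ⟨Function.update cfg.played (nth σ t).2 (nth σ t).1, cfg.hand, insert t cfg.done⟩
        t' cfg') : Reach σ h t cfg t' cfg'
  | playHand (t : ℕ) (cfg : Config) (t' : ℕ) (cfg' : Config) (j : ℕ) (hj : j ∈ cfg.hand)
      (hplay : cfg.played (nth σ j).2 + 1 = (nth σ j).1)
      (tail : Reach σ h t
        ⟨Function.update cfg.played (nth σ j).2 (nth σ j).1, cfg.hand.erase j,
          insert j cfg.done⟩ t' cfg') : Reach σ h t cfg t' cfg'

variable {σ : List Card} {h : ℕ}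

lemma Reach.trans {t1 c1 t2 c2 t3 c3} (h1 : Reach σ h t1 c1 t2 c2)
    (h2 : Reach σ h t2 c2 t3 c3) : Reach σ h t1 c1 t3 c3 := by
  induction h1 with
  | refl => exact h2
  | discard t cfg t' cfg' ht tail ih => exact .discard _ _ _ _ ht (ih h2)
  | store t cfg t' cfg' ht hsz tail ih => exact .store _ _ _ _ ht hsz (ih h2)
  | playNow t cfg t' cfg' ht hplay tail ih => exact .playNow _ _ _ _ ht hplay (ih h2)
  | playHand t cfg t' cfg' j hj hplay tail ih => exact .playHand _ _ _ _ j hj hplay (ih h2)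

lemma Reach.le {t1 c1 t2 c2} (h1 : Reach σ h t1 c1 t2 c2) : t1 ≤ t2 := by
  induction h1 <;> omega

lemma Reach.inv {t1 c1 t2 c2} (hr : Reach σ h t1 c1 t2 c2) :
    c1.hand.card ≤ h → (∀ j ∈ c1.hand, j < t1 ∧ j < σ.length) →
    c2.hand.card ≤ h ∧ (∀ j ∈ c2.hand, j < t2 ∧ j < σ.length) := by
  induction hr with
  | refl => exact fun a b => ⟨a, b⟩
  | discard t cfg t' cfg' ht tail ih =>
      intro hc hm
      exact ih hc (fun j hj => ⟨by have := (hm j hj).1; omega, (hm j hj).2⟩)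
  | store t cfg t' cfg' ht hsz tail ih =>
      intro hc hm
      refine ih hsz ?_
      intro j hj
      rcases Finset.mem_insert.mp hj with rfl | hj'
      · exact ⟨by omega, ht⟩
      · exact ⟨by have := (hm j hj').1; omega, (hm j hj').2⟩
  | playNow t cfg t' cfg' ht hplay tail ih =>
      intro hc hm
      exact ih hc (fun j hj => ⟨by have := (hm j hj).1; omega, (hm j hj).2⟩)
  | playHand t cfg t' cfg' j hj hplay tail ih =>
      intro hc hm
      refine ih (le_trans (Finset.card_le_card (Finset.erase_subset _ _)) hc) ?_
      intro k hk
      exact hm k (Finset.mem_of_mem_erase hk)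

lemma Reach.hand_back {t1 c1 t2 c2} (hr : Reach σ h t1 c1 t2 c2) :
    ∀ {p : ℕ}, p ∈ c2.hand → p < t1 → p ∈ c1.hand := by
  induction hr with
  | refl => exact fun hp _ => hp
  | discard t cfg t' cfg' ht tail ih => exact fun hp hlt => ih hp (by omega)
  | store t cfg t' cfg' ht hsz tail ih =>
      intro p hp hlt
      have := ih hp (by omega)
      rcases Finset.mem_insert.mp this with rfl | h' <;> [omega; exact h']
  | playNow t cfg t' cfg' ht hplay tail ih => exact fun hp hlt => ih hp (by omega)
  | playHand t cfg t' cfg' j hj hplay tail ih =>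
      exact fun hp hlt => Finset.mem_of_mem_erase (ih hp hlt)


lemma split_done {t1 c1 t2 c2} {p : ℕ} (hr : Reach σ h t1 c1 t2 c2) :
    p ∈ c2.done → p ∉ c1.done →
    ∃ t3 c3 t4 c4, Reach σ h t1 c1 t3 c3 ∧ Reach σ h t4 c4 t2 c2 ∧
      c3.played (nth σ p).2 + 1 = (nth σ p).1 ∧
      c4.played = Function.update c3.played (nth σ p).2 (nth σ p).1 ∧
      c4.hand ⊆ c3.hand ∧ t3 ≤ t4 ∧
      ((p ∈ c3.hand ∧ t4 = t3) ∨ (t3 = p ∧ p < σ.length ∧ t4 = t3 + 1)) := by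
  induction hr with
  | refl => exact fun h1 h2 => absurd h1 h2
  | discard t cfg t' cfg' ht tail ih =>
      intro h1 h2
      obtain ⟨t3, c3, t4, c4, r1, rest⟩ := ih h1 h2
      exact ⟨t3, c3, t4, c4, .discard _ _ _ _ ht r1, rest⟩
  | store t cfg t' cfg' ht hsz tail ih =>
      intro h1 h2
      obtain ⟨t3, c3, t4, c4, r1, rest⟩ := ih h1 h2
      exact ⟨t3, c3, t4, c4, .store _ _ _ _ ht hsz r1, rest⟩
  | playNow t cfg t' cfg' ht hplay tail ih =>
      intro h1 h2
      by_cases hpt : p = t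
      · subst hpt
        exact ⟨p, cfg, p+1, _, .refl _ _, tail, hplay, rfl, fun x hx => hx, by omega,
          Or.inr ⟨rfl, ht, rfl⟩⟩
      · have : p ∉ (insert t cfg.done) := by
          simp only [Finset.mem_insert]; tauto
        obtain ⟨t3, c3, t4, c4, r1, rest⟩ := ih h1 this
        exact ⟨t3, c3, t4, c4, .playNow _ _ _ _ ht hplay r1, rest⟩
  | playHand t cfg t' cfg' j hj hplay tail ih =>
      intro h1 h2
      by_cases hpj : p = j
      · subst hpj
        exact ⟨t, cfg, t, _, .refl _ _, tail, hplay, rfl, Finset.erase_subset _ _, le_refl _,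
          Or.inl ⟨hj, rfl⟩⟩

      · have : p ∉ (insert j cfg.done) := by
          simp only [Finset.mem_insert]; tauto
        obtain ⟨t3, c3, t4, c4, r1, rest⟩ := ih h1 this
        exact ⟨t3, c3, t4, c4, .playHand _ _ _ _ j hj hplay r1, rest⟩

lemma find_play {n w : ℕ} (hval : ValidDeck σ n 1) {t4 c4 t2 c2}
    (hr : Reach σ h t4 c4 t2 c2) :
    (∀ j ∈ c4.hand, j < σ.length) → c4.played 1 < w → w ≤ c2.played 1 →
    ∃ t5 c5 p, Reach σ h t4 c4 t5 c5 ∧ p < σ.length ∧ (nth σ p).1 = w ∧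
      (p ∈ c5.hand ∨ t5 = p) := by
  induction hr with
  | refl => intro _ h1 h2; omega
  | discard t cfg t' cfg' ht tail ih =>
      intro hh h1 h2
      obtain ⟨t5, c5, p, r, rest⟩ := ih hh h1 h2
      exact ⟨t5, c5, p, .discard _ _ _ _ ht r, rest⟩
  | store t cfg t' cfg' ht hsz tail ih =>
      intro hh h1 h2
      have hh' : ∀ j ∈ insert t cfg.hand, j < σ.length := by
        intro j hj
        rcases Finset.mem_insert.mp hj with rfl | hj' <;> [exact ht; exact hh j hj']
      obtain ⟨t5, c5, p, r, rest⟩ := ih hh' h1 h2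
      exact ⟨t5, c5, p, .store _ _ _ _ ht hsz r, rest⟩
  | playNow t cfg t' cfg' ht hplay tail ih =>
      intro hh h1 h2
      have hc : (nth σ t).2 = 1 := color_one hval ht
      rw [hc] at hplay
      by_cases hw : w ≤ (nth σ t).1
      · refine ⟨t, cfg, t, .refl _ _, ht, by omega, Or.inr rfl⟩
      · have h1' : (Function.update cfg.played (nth σ t).2 (nth σ t).1) 1 < w := by
          rw [hc, Function.update_self]; omega
        obtain ⟨t5, c5, p, r, rest⟩ := ih hh h1' h2
        exact ⟨t5, c5, p, .playNow _ _ _ _ ht (by rw [hc]; exact hplay) r, rest⟩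
  | playHand t cfg t' cfg' j hj hplay tail ih =>
      intro hh h1 h2
      have hjlen : j < σ.length := hh j hj
      have hc : (nth σ j).2 = 1 := color_one hval hjlen
      rw [hc] at hplay
      by_cases hw : w ≤ (nth σ j).1
      · refine ⟨t, cfg, j, .refl _ _, hjlen, by omega, Or.inl hj⟩
      · have h1' : (Function.update cfg.played (nth σ j).2 (nth σ j).1) 1 < w := by
          rw [hc, Function.update_self]; omega
        have hh' : ∀ k ∈ cfg.hand.erase j, k < σ.length :=
          fun k hk => hh k (Finset.mem_of_mem_erase hk)
        obtain ⟨t5, c5, p, r, rest⟩ := ih hh' h1' h2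
        exact ⟨t5, c5, p, .playHand _ _ _ _ j hj (by rw [hc]; exact hplay) r, rest⟩


lemma pfh_reach {t c c'} (hp : PlayFromHand σ c c') : Reach σ h t c t c' := by
  induction hp with
  | refl => exact .refl _ _
  | play cfg cfg' j hj hplay htail ih => exact .playHand _ _ _ _ j hj hplay ih

lemma step_reach {t c c'} (ht : t < σ.length) (hs : Step σ h t c c') :
    Reach σ h t c (t+1) c' := by
  cases hs with
  | discard => exact .discard _ _ _ _ ht (.refl _ _)
  | store hsz => exact .store _ _ _ _ ht hsz (.refl _ _)
  | playNow cfg' hplay htail => exact .playNow _ _ _ _ ht hplay (pfh_reach htail)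

lemma playseq_reach_aux {start} (ps : PlaySeq σ h start) :
    ∀ d j, j + d = σ.length → Reach σ h j (ps.cfgs j) σ.length ps.final := by
  intro d
  induction d with
  | zero =>
      intro j hj
      have : j = σ.length := by omega
      subst this
      exact .refl _ _
  | succ d ih =>
      intro j hj
      have hjlt : j < σ.length := by omega
      exact Reach.trans (step_reach hjlt (ps.step j hjlt)) (ih (j+1) (by omega))

lemma playseq_reach {start} (ps : PlaySeq σ h start) :
    Reach σ h 0 (ps.cfgs 0) σ.length ps.final :=
  playseq_reach_aux ps σ.length 0 (by omega)

lemma pfh_done_mono {c c'} (hp : PlayFromHand σ c c') : c.done ⊆ c'.done := by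
  induction hp with
  | refl => exact fun x hx => hx
  | play cfg cfg' j hj hplay htail ih =>
      exact fun x hx => ih (Finset.mem_insert_of_mem hx)

lemma step_done_mono {t c c'} (hs : Step σ h t c c') : c.done ⊆ c'.done := by
  cases hs with
  | discard => exact fun x hx => hx
  | store hsz => exact fun x hx => hx
  | playNow cfg' hplay htail =>
      exact fun x hx => pfh_done_mono htail (Finset.mem_insert_of_mem hx)

lemma cfgs_done_mono {start} (ps : PlaySeq σ h start) :
    ∀ k, k ≤ σ.length → ∀ j, j ≤ k → (ps.cfgs j).done ⊆ (ps.cfgs k).done := by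
  intro k
  induction k with
  | zero =>
      intro _ j hj
      have hj0 : j = 0 := by omega
      subst hj0
      exact fun x hx => hx
  | succ k ih =>
      intro hk j hj
      rcases Nat.lt_or_ge j (k+1) with hlt | hge
      · exact Finset.Subset.trans (ih (by omega) j (by omega))
          (step_done_mono (ps.step k (by omega)))
      · have : j = k + 1 := by omega
        subst this; exact fun x hx => hx

lemma not_done {n i : ℕ} (hval : ValidDeck σ n 1) (hi : i < σ.length)
    (hu : Useless σ h n i) (ps : PlaySeq σ h Config.initial) (hwin : ps.Winning n 1) :
    i ∉ ps.final.done := by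
  intro hdone
  obtain ⟨W, hWcard, hWval, hWafter⟩ := hu
  have hreach : Reach σ h 0 Config.initial σ.length ps.final := by
    have := playseq_reach ps; rwa [ps.init] at this
  obtain ⟨t3, c3, t4, c4, r1, r2, hplay3, hupd, hsub, ht34, hdisj⟩ :=
    split_done hreach hdone (by simp [Config.initial])
  obtain ⟨hcard3, hmem3⟩ := Reach.inv r1 (by simp [Config.initial])
    (by simp [Config.initial])
  have hcol : (nth σ i).2 = 1 := color_one hval hi
  have hit3 : i ≤ t3 := by
    rcases hdisj with ⟨hmem, _⟩ | ⟨rfl, _⟩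
    · exact le_of_lt (hmem3 i hmem).1
    · exact le_refl _
  have h4played : c4.played 1 = (nth σ i).1 := by
    rw [hupd, hcol, Function.update_self]
  have hwin1 : n ≤ ps.final.played 1 := hwin 1 (le_refl _) (le_refl _)
  have key : ∀ w ∈ W, ∃ p ∈ c3.hand, (nth σ p).1 = w := by
    intro w hw
    obtain ⟨haiw, hwn⟩ := hWval w hw
    have hc4hand : ∀ j ∈ c4.hand, j < σ.length := fun j hj => (hmem3 j (hsub hj)).2
    obtain ⟨t5, c5, p, r3, hplen, hpval, hpcase⟩ :=
      find_play hval r2 hc4hand (by rw [h4played]; exact haiw) (le_trans hwn hwin1)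
    have hpi : p ≤ i := by
      by_contra hgt
      exact hWafter p (by omega) hplen (by rw [hpval]; exact hw)
    have hplt : p < i := by
      rcases Nat.lt_or_ge p i with h' | h'
      · exact h'
      · have : p = i := by omega
        subst this; omega
    rcases hpcase with hmem5 | rfl
    · have hp4 : p ∈ c4.hand := Reach.hand_back r3 hmem5 (by omega)
      exact ⟨p, hsub hp4, hpval⟩
    · have := Reach.le r3
      omega
  have key' : ∀ w : ℕ, ∃ p : ℕ, w ∈ W → p ∈ c3.hand ∧ (nth σ p).1 = w := by
    intro w
    by_cases hw : w ∈ W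
    · obtain ⟨p, hp1, hp2⟩ := key w hw
      exact ⟨p, fun _ => ⟨hp1, hp2⟩⟩
    · exact ⟨0, fun hww => absurd hww hw⟩
  choose pf hpf using key'
  have hle : W.card ≤ c3.hand.card := by
    apply Finset.card_le_card_of_injOn pf (fun w hw => (hpf w hw).1)
    intro a ha b hb heq
    have h1 := (hpf a ha).2
    have h2 := (hpf b hb).2
    rw [← h1, ← h2, heq]
  omega


/-! ### Position relabelling -/

def fmap (i j : ℕ) : ℕ := if j < i then j else j - 1
def gmap (i j : ℕ) : ℕ := if j < i then j else j + 1

lemma gmap_inj (i : ℕ) : Function.Injective (gmap i) := by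
  intro a b
  unfold gmap
  split <;> split <;> omega

lemma fmap_injOn (i : ℕ) {a b : ℕ} (ha : a ≠ i) (hb : b ≠ i) (heq : fmap i a = fmap i b) :
    a = b := by
  unfold fmap at heq
  split at heq <;> split at heq <;> omega

lemma nth_gmap {σ : List Card} {i : ℕ} (j : ℕ) :
    nth σ (gmap i j) = nth (σ.eraseIdx i) j := by
  rw [nth_eraseIdx]
  unfold gmap
  split <;> rfl

lemma nth_fmap {σ : List Card} {i : ℕ} {j : ℕ} (hj : j ≠ i) :
    nth (σ.eraseIdx i) (fmap i j) = nth σ j := by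
  rw [nth_eraseIdx]
  unfold fmap
  rcases Nat.lt_or_ge j i with h' | h'
  · rw [if_pos h', if_pos h']
  · have h1 : ¬ j < i := by omega
    have h2 : ¬ j - 1 < i := by omega
    rw [if_neg h1, if_neg h2]
    congr 1
    omega

def smap (i : ℕ) (cfg : Config) : Config :=
  ⟨cfg.played, cfg.hand.image (gmap i), cfg.done.image (gmap i)⟩

def tmap (i : ℕ) (cfg : Config) : Config :=
  ⟨cfg.played, (cfg.hand.erase i).image (fmap i), cfg.done.image (fmap i)⟩

@[simp] lemma smap_played (i : ℕ) (cfg : Config) : (smap i cfg).played = cfg.played := rfl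
@[simp] lemma tmap_played (i : ℕ) (cfg : Config) : (tmap i cfg).played = cfg.played := rfl

lemma smap_initial (i : ℕ) : smap i Config.initial = Config.initial := by
  simp [smap, Config.initial]

lemma tmap_initial (i : ℕ) : tmap i Config.initial = Config.initial := by
  simp [tmap, Config.initial]

lemma image_fmap_erase (i : ℕ) {s : Finset ℕ} (hs : i ∉ s) {j : ℕ} (hj : j ≠ i) :
    (s.erase j).image (fmap i) = (s.image (fmap i)).erase (fmap i j) := by
  ext x
  simp only [Finset.mem_image, Finset.mem_erase]
  constructor
  · rintro ⟨y, ⟨hyj, hy⟩, rfl⟩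
    have hyi : y ≠ i := fun hc => hs (hc ▸ hy)
    refine ⟨fun hc => hyj (fmap_injOn i hyi hj hc), y, hy, rfl⟩
  · rintro ⟨hne, y, hy, rfl⟩
    have hyi : y ≠ i := fun hc => hs (hc ▸ hy)
    exact ⟨y, ⟨fun hc => hne (by rw [hc]), hy⟩, rfl⟩

/-! ### Transfer from the erased deck to the original deck -/

lemma pfh_g {σ : List Card} {i : ℕ} {c c' : Config}
    (hp : PlayFromHand (σ.eraseIdx i) c c') :
    PlayFromHand σ (smap i c) (smap i c') := by
  induction hp with
  | refl => exact .refl _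
  | play cfg cfg' j hj hplay htail ih =>
      refine .play _ _ (gmap i j) (Finset.mem_image_of_mem _ hj) ?_ ?_
      · rw [nth_gmap]; exact hplay
      · have hcfg : (⟨Function.update (smap i cfg).played (nth σ (gmap i j)).2
            (nth σ (gmap i j)).1, (smap i cfg).hand.erase (gmap i j),
            insert (gmap i j) (smap i cfg).done⟩ : Config) =
            smap i ⟨Function.update cfg.played (nth (σ.eraseIdx i) j).2
              (nth (σ.eraseIdx i) j).1, cfg.hand.erase j, insert j cfg.done⟩ := by
          rw [nth_gmap]
          simp only [smap]
          congr 1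
          · exact (Finset.image_erase (gmap_inj i) _ _).symm
          · exact (Finset.image_insert _ _ _).symm
        rw [hcfg]
        exact ih

lemma step_g {σ : List Card} {h i : ℕ} {j : ℕ} {c c' : Config}
    (hs : Step (σ.eraseIdx i) h j c c') :
    Step σ h (gmap i j) (smap i c) (smap i c') := by
  cases hs with
  | discard => exact .discard _
  | store hsz =>
      have hcfg : smap i (⟨c.played, insert j c.hand, c.done⟩ : Config) =
          ⟨(smap i c).played, insert (gmap i j) (smap i c).hand, (smap i c).done⟩ := by
        simp only [smap]
        congr 1
        exact Finset.image_insert _ _ _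
      rw [hcfg]
      refine .store _ ?_
      have : insert (gmap i j) (smap i c).hand = (insert j c.hand).image (gmap i) := by
        simp only [smap]
        rw [Finset.image_insert]
      rw [this, Finset.card_image_of_injective _ (gmap_inj i)]
      exact hsz
  | playNow cfg' hplay htail =>
      refine .playNow _ _ ?_ ?_
      · rw [nth_gmap]; exact hplay
      · have hcfg : (⟨Function.update (smap i c).played (nth σ (gmap i j)).2
            (nth σ (gmap i j)).1, (smap i c).hand, insert (gmap i j) (smap i c).done⟩ : Config) =
            smap i ⟨Function.update c.played (nth (σ.eraseIdx i) j).2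
              (nth (σ.eraseIdx i) j).1, c.hand, insert j c.done⟩ := by
          rw [nth_gmap]
          simp only [smap]
          congr 1
          exact (Finset.image_insert _ _ _).symm
        rw [hcfg]
        exact pfh_g htail

/-! ### Transfer from the original deck to the erased deck -/

lemma pfh_f {σ : List Card} {i : ℕ} {c c' : Config}
    (hp : PlayFromHand σ c c') (hdone : i ∉ c'.done) :
    PlayFromHand (σ.eraseIdx i) (tmap i c) (tmap i c') := by
  induction hp with
  | refl => exact .refl _
  | play cfg cfg' j hj hplay htail ih =>
      have hji : j ≠ i := by
        intro hc
        subst hc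
        exact hdone (pfh_done_mono htail (Finset.mem_insert_self _ _))
      refine .play _ _ (fmap i j)
        (Finset.mem_image_of_mem _ (Finset.mem_erase.mpr ⟨hji, hj⟩)) ?_ ?_
      · rw [nth_fmap hji]; exact hplay
      · have hcfg : (⟨Function.update (tmap i cfg).played (nth (σ.eraseIdx i) (fmap i j)).2
            (nth (σ.eraseIdx i) (fmap i j)).1, (tmap i cfg).hand.erase (fmap i j),
            insert (fmap i j) (tmap i cfg).done⟩ : Config) =
            tmap i ⟨Function.update cfg.played (nth σ j).2 (nth σ j).1,
              cfg.hand.erase j, insert j cfg.done⟩ := by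
          rw [nth_fmap hji]
          simp only [tmap]
          congr 1
          · rw [Finset.erase_right_comm]
            exact (image_fmap_erase i (Finset.notMem_erase _ _) hji).symm
          · exact (Finset.image_insert _ _ _).symm
        rw [hcfg]
        exact ih hdone

lemma step_f {σ : List Card} {h i : ℕ} {j : ℕ} {c c' : Config}
    (hji : j ≠ i) (hs : Step σ h j c c') (hdone : i ∉ c'.done) :
    Step (σ.eraseIdx i) h (fmap i j) (tmap i c) (tmap i c') := by
  cases hs with
  | discard => exact .discard _
  | store hsz =>
      have hins : (insert j c.hand).erase i = insert j (c.hand.erase i) :=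
        Finset.erase_insert_of_ne hji
      have hcfg : tmap i (⟨c.played, insert j c.hand, c.done⟩ : Config) =
          ⟨(tmap i c).played, insert (fmap i j) (tmap i c).hand, (tmap i c).done⟩ := by
        simp only [tmap]
        congr 1
        rw [hins, Finset.image_insert]
      rw [hcfg]
      refine .store _ ?_
      have h1 : insert (fmap i j) (tmap i c).hand = (insert j (c.hand.erase i)).image (fmap i) := by
        simp only [tmap]
        rw [Finset.image_insert]
      rw [h1]
      have h2 : ((insert j (c.hand.erase i)).image (fmap i)).card =
          (insert j (c.hand.erase i)).card := by
        apply Finset.card_image_of_injOn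
        intro a ha b hb heq
        have hai : a ≠ i := by
          rcases Finset.mem_insert.mp ha with rfl | ha' <;>
            [exact hji; exact (Finset.mem_erase.mp ha').1]
        have hbi : b ≠ i := by
          rcases Finset.mem_insert.mp hb with rfl | hb' <;>
            [exact hji; exact (Finset.mem_erase.mp hb').1]
        exact fmap_injOn i hai hbi heq
      rw [h2]
      calc (insert j (c.hand.erase i)).card
          ≤ (insert j c.hand).card :=
            Finset.card_le_card (Finset.insert_subset_insert _ (Finset.erase_subset _ _))
        _ ≤ h := hsz
  | playNow cfg' hplay htail =>
      refine .playNow _ _ ?_ ?_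
      · rw [nth_fmap hji]; exact hplay
      · have hcfg : (⟨Function.update (tmap i c).played (nth (σ.eraseIdx i) (fmap i j)).2
            (nth (σ.eraseIdx i) (fmap i j)).1, (tmap i c).hand,
            insert (fmap i j) (tmap i c).done⟩ : Config) =
            tmap i ⟨Function.update c.played (nth σ j).2 (nth σ j).1,
              c.hand, insert j c.done⟩ := by
          rw [nth_fmap hji]
          simp only [tmap]
          congr 1
          exact (Finset.image_insert _ _ _).symm
        rw [hcfg]
        exact pfh_f htail hdone


/-! ### Constructions -/

lemma length_erase {σ : List Card} {i : ℕ} (hi : i < σ.length) :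
    (σ.eraseIdx i).length = σ.length - 1 := by
  rw [List.length_eraseIdx]
  simp [hi]

lemma tmap_step_eq {σ : List Card} {h i : ℕ} {c c' : Config}
    (hs : Step σ h i c c') (hd : i ∉ c'.done) : tmap i c = tmap i c' := by
  cases hs with
  | discard => rfl
  | store hsz =>
      simp only [tmap]
      congr 1
      rw [Finset.erase_insert_eq_erase]
  | playNow cfg' hplay htail =>
      exact absurd (pfh_done_mono htail (Finset.mem_insert_self _ _)) hd

lemma forward {n h : ℕ} {σ : List Card} (hval : ValidDeck σ n 1) {i : ℕ}
    (hi : i < σ.length) (hu : Useless σ h n i)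
    (ps : PlaySeq σ h Config.initial) (hwin : ps.Winning n 1) :
    ∃ ps' : PlaySeq (σ.eraseIdx i) h Config.initial, ps'.Winning n 1 := by
  have hndone : i ∉ ps.final.done := not_done hval hi hu ps hwin
  have hmono := cfgs_done_mono ps
  have hnd : ∀ t, t ≤ σ.length → i ∉ (ps.cfgs t).done := by
    intro t ht hc
    exact hndone (hmono σ.length (le_refl _) t ht hc)
  have htei : tmap i (ps.cfgs i) = tmap i (ps.cfgs (i+1)) :=
    tmap_step_eq (ps.step i hi) (hnd (i+1) (by omega))
  have hlen : (σ.eraseIdx i).length = σ.length - 1 := length_erase hi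
  refine ⟨⟨fun j => if j < i then tmap i (ps.cfgs j) else tmap i (ps.cfgs (j+1)), ?_, ?_⟩, ?_⟩
  · beta_reduce
    by_cases h0 : 0 < i
    · rw [if_pos h0, ps.init, tmap_initial]
    · have hi0 : i = 0 := by omega
      rw [if_neg h0]
      subst hi0
      rw [← htei, ps.init, tmap_initial]
  · intro j hj
    rw [hlen] at hj
    beta_reduce
    rcases Nat.lt_or_ge j i with hji | hji
    · have hstep := step_f (show j ≠ i by omega) (ps.step j (by omega))
        (hnd (j+1) (by omega))
      have hfj : fmap i j = j := if_pos hji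
      rw [hfj] at hstep
      rw [if_pos hji]
      by_cases hj1 : j + 1 < i
      · rw [if_pos hj1]; exact hstep
      · have hj1e : j + 1 = i := by omega
        rw [if_neg hj1]
        rw [hj1e] at hstep
        rw [htei] at hstep
        rw [hj1e]
        exact hstep
    · have hstep := step_f (show j + 1 ≠ i by omega) (ps.step (j+1) (by omega))
        (hnd (j+2) (by omega))
      have hfj : fmap i (j+1) = j := by
        unfold fmap
        rw [if_neg (show ¬ j + 1 < i by omega)]
        omega
      rw [hfj] at hstep
      rw [if_neg (show ¬ j < i by omega), if_neg (show ¬ j + 1 < i by omega)]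
      exact hstep
  · intro k hk1 hk2
    simp only [PlaySeq.final, hlen]
    beta_reduce
    rw [if_neg (show ¬ σ.length - 1 < i by omega)]
    have he : σ.length - 1 + 1 = σ.length := by omega
    rw [he]
    exact hwin k hk1 hk2

lemma backward {n h : ℕ} {σ : List Card} {i : ℕ} (hi : i < σ.length)
    (ps' : PlaySeq (σ.eraseIdx i) h Config.initial) (hwin : ps'.Winning n 1) :
    ∃ ps : PlaySeq σ h Config.initial, ps.Winning n 1 := by
  have hlen : (σ.eraseIdx i).length = σ.length - 1 := length_erase hi
  refine ⟨⟨fun j => if j ≤ i then smap i (ps'.cfgs j) else smap i (ps'.cfgs (j-1)), ?_, ?_⟩, ?_⟩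
  · beta_reduce
    rw [if_pos (show 0 ≤ i by omega), ps'.init, smap_initial]
  · intro j hj
    beta_reduce
    rcases Nat.lt_or_ge j i with hji | hji
    · have hstep := step_g (i := i) (ps'.step j (by rw [hlen]; omega))
      have hgj : gmap i j = j := if_pos hji
      rw [hgj] at hstep
      rw [if_pos (show j ≤ i by omega), if_pos (show j + 1 ≤ i by omega)]
      exact hstep
    · by_cases hje : j = i
      · subst hje
        rw [if_pos (le_refl j), if_neg (show ¬ j + 1 ≤ j by omega)]
        have he : j + 1 - 1 = j := by omega
        rw [he]
        exact .discard _
      · have hjgt : i < j := by omega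
        have hstep := step_g (i := i) (ps'.step (j-1) (by rw [hlen]; omega))
        have hgj : gmap i (j-1) = j := by
          unfold gmap
          rw [if_neg (show ¬ j - 1 < i by omega)]
          omega
        rw [hgj] at hstep
        rw [if_neg (show ¬ j ≤ i by omega), if_neg (show ¬ j + 1 ≤ i by omega)]
        have he : j + 1 - 1 = j := by omega
        rw [he]
        have he2 : j - 1 + 1 = j := by omega
        rw [he2] at hstep
        exact hstep
  · intro k hk1 hk2
    simp only [PlaySeq.final]
    rw [if_neg (show ¬ σ.length ≤ i by omega)]
    have hw := hwin k hk1 hk2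
    simp only [PlaySeq.final, hlen] at hw
    exact hw

end HanabiAux

/-- In the single-color case, deleting a useless card does not change
whether a winning play sequence with hand size `h` exists. -/
theorem winning_iff_winning_erase_useless
    (n h : ℕ) (σ : List Card) (hval : ValidDeck σ n 1)
    (i : ℕ) (hi : i < σ.length) (hu : Useless σ h n i) :
    (∃ ps : PlaySeq σ h Config.initial, ps.Winning n 1) ↔
      (∃ ps : PlaySeq (σ.eraseIdx i) h Config.initial, ps.Winning n 1) := by
  constructor
  · rintro ⟨ps, hwin⟩
    exact HanabiAux.forward hval hi hu ps hwin
  · rintro ⟨ps', hwin⟩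
    exact HanabiAux.backward hi ps' hwin
end

section
/- Let σ be a Hanabi deck over n values with a single color (c = 1) and let h be a hand size. Let σ* be any sequence obtained from σ by repeatedly deleting a card that is useless (for hand size h) in the current sequence, until no useless card remains. Then σ has a winning play sequence with hand size h if and only if σ* contains at least one card of each value 1,…,n. -/
/-- One filtering step: delete one card that is useless in the current sequence. -/
def DeleteUselessStep (h n : ℕ) (σ τ : List Card) : Prop :=
  ∃ i < σ.length, Useless σ h n i ∧ τ = σ.eraseIdx i

/-!
Deleting a useless card `d` does not change winnability. A play of `σ.eraseIdx d` becomes a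
play of `σ` by discarding `d`. Conversely a winning play never plays `d`: afterwards the
`h + 1` values of the witness set of `d` all lie above the progress, none of them is drawn
again, and at most `h` of them are in hand. A play that never plays `d` is a play of
`σ.eraseIdx d`.

So it suffices to treat a deck without useless cards. Every played value occurs in the deck,
and if every value occurs, the greedy strategy wins: play what fits, then play from the hand
as long as possible, and store exactly the last card of each value not yet played.
-/

lemma nth_of_lt {σ : List Card} {j : ℕ} (hj : j < σ.length) : nth σ j = σ[j] :=
  List.getD_eq_getElem σ _ hj

lemma nth_of_le {σ : List Card} {j : ℕ} (hj : σ.length ≤ j) : nth σ j = (0, 0) :=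
  List.getD_eq_default σ _ hj

lemma nth_mem_s4 {σ : List Card} {j : ℕ} (hj : j < σ.length) : nth σ j ∈ σ := by
  rw [nth_of_lt hj]
  exact List.getElem_mem hj

lemma lt_length_of_value_pos {σ : List Card} {j : ℕ} (hj : 0 < (nth σ j).1) :
    j < σ.length := by
  by_contra hlen
  rw [nth_of_le (not_lt.1 hlen)] at hj
  exact lt_irrefl 0 hj

lemma lt_length_of_play {σ : List Card} {m j : ℕ} (hplay : m + 1 = (nth σ j).1) :
    j < σ.length :=
  lt_length_of_value_pos (by omega)

lemma ValidDeck.color_eq_one {σ : List Card} {n j : ℕ} (hval : ValidDeck σ n 1)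
    (hj : j < σ.length) : (nth σ j).2 = 1 := by
  have := hval _ (nth_mem_s4 hj)
  omega

lemma ValidDeck.value_le {σ : List Card} {n c j : ℕ} (hval : ValidDeck σ n c)
    (hj : j < σ.length) : (nth σ j).1 ≤ n :=
  (hval _ (nth_mem_s4 hj)).2.1

lemma ValidDeck.eraseIdx {σ : List Card} {n c : ℕ} (hval : ValidDeck σ n c) (d : ℕ) :
    ValidDeck (σ.eraseIdx d) n c :=
  fun cd hcd => hval cd (List.eraseIdx_subset hcd)

namespace PlayFromHand

variable {σ : List Card} {c c' : Config}

lemma hand_subset (hp : PlayFromHand σ c c') : c'.hand ⊆ c.hand := by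
  induction hp with
  | refl => exact subset_rfl
  | play _ _ _ _ _ _ ih => exact ih.trans (Finset.erase_subset _ _)

lemma done_subset (hp : PlayFromHand σ c c') : c.done ⊆ c'.done := by
  induction hp with
  | refl => exact subset_rfl
  | play _ _ _ _ _ _ ih => exact (Finset.subset_insert _ _).trans ih

lemma done_subset_union (hp : PlayFromHand σ c c') : c'.done ⊆ c.done ∪ c.hand := by
  induction hp with
  | refl => exact Finset.subset_union_left
  | play _ _ j hj _ _ ih =>
    refine ih.trans (Finset.union_subset ?_ ((Finset.erase_subset _ _).trans
      Finset.subset_union_right))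
    exact Finset.insert_subset (Finset.mem_union_right _ hj) Finset.subset_union_left

end PlayFromHand

lemma Step.done_subset {σ : List Card} {h i : ℕ} {c c' : Config} (hs : Step σ h i c c') :
    c.done ⊆ c'.done := by
  cases hs with
  | discard | store => exact subset_rfl
  | playNow _ _ htail => exact (Finset.subset_insert _ _).trans htail.done_subset

/-- Unlike `PlaySeq`, steps past the end of the deck are allowed; they can only discard or
store dummy cards of value `0`. -/
inductive Reachable (σ : List Card) (h : ℕ) : ℕ → Config → Prop
  | initial : Reachable σ h 0 Config.initial
  | step {i : ℕ} {c c' : Config} :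
      Reachable σ h i c → Step σ h i c c' → Reachable σ h (i + 1) c'

def Winnable (σ : List Card) (h n : ℕ) : Prop :=
  ∃ c, Reachable σ h σ.length c ∧ n ≤ c.played 1

namespace Reachable

variable {σ : List Card} {h i : ℕ} {c : Config}

lemma of_le (hr : Reachable σ h i c) {j : ℕ} (hij : i ≤ j) : Reachable σ h j c := by
  induction j, hij using Nat.le_induction with
  | base => exact hr
  | succ j _ ih => exact ih.step (.discard c)

lemma card_hand_le (hr : Reachable σ h i c) : c.hand.card ≤ h := by
  induction hr with
  | initial => simp [Config.initial]
  | step _ hs ih =>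
    cases hs with
    | discard => exact ih
    | store hsize => exact hsize
    | playNow _ _ htail => exact (Finset.card_le_card htail.hand_subset).trans ih

lemma lt_of_mem (hr : Reachable σ h i c) : ∀ j ∈ c.hand ∪ c.done, j < i := by
  induction hr with
  | initial => simp [Config.initial]
  | @step i c c' _ hs ih =>
    suffices hsub : c'.hand ∪ c'.done ⊆ insert i (c.hand ∪ c.done) by
      intro j hj
      rcases Finset.mem_insert.1 (hsub hj) with rfl | hj
      · omega
      · exact (ih j hj).trans (by omega)
    cases hs with
    | discard => exact Finset.subset_insert _ _
    | store =>
      intro x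
      simp only [Finset.mem_union, Finset.mem_insert]
      tauto
    | playNow _ _ htail =>
      refine Finset.union_subset (htail.hand_subset.trans ?_) (htail.done_subset_union.trans ?_)
      all_goals
        intro x
        simp only [Finset.mem_union, Finset.mem_insert]
        tauto

lemma exists_cfgs (hr : Reachable σ h i c) :
    ∃ f : ℕ → Config, f 0 = Config.initial ∧ (∀ k < i, Step σ h k (f k) (f (k + 1))) ∧
      f i = c := by
  induction hr with
  | initial => exact ⟨fun _ => Config.initial, rfl, by simp, rfl⟩
  | @step i c c' _ hs ih =>
    obtain ⟨f, hf0, hstep, hfi⟩ := ih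
    refine ⟨Function.update f (i + 1) c', by simp [hf0], fun k hk => ?_, by simp⟩
    rw [Function.update_of_ne (by omega)]
    rcases Nat.lt_succ_iff_lt_or_eq.1 hk with hk | rfl
    · rw [Function.update_of_ne (by omega)]
      exact hstep k hk
    · rw [Function.update_self, hfi]
      exact hs

end Reachable

lemma PlaySeq.reachable {σ : List Card} {h : ℕ} (ps : PlaySeq σ h Config.initial) :
    ∀ i ≤ σ.length, Reachable σ h i (ps.cfgs i)
  | 0, _ => by rw [ps.init]; exact .initial
  | i + 1, hi => (ps.reachable i (by omega)).step (ps.step i (by omega))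

lemma exists_winning_playSeq_iff {σ : List Card} {h n : ℕ} :
    (∃ ps : PlaySeq σ h Config.initial, ps.Winning n 1) ↔ Winnable σ h n := by
  have hwin (ps : PlaySeq σ h Config.initial) : ps.Winning n 1 ↔ n ≤ ps.final.played 1 :=
    ⟨fun hw => hw 1 le_rfl le_rfl, fun hw k hk1 hk2 => (by omega : k = 1) ▸ hw⟩
  simp only [hwin]
  constructor
  · rintro ⟨ps, hw⟩
    exact ⟨ps.final, ps.reachable _ le_rfl, hw⟩
  · rintro ⟨c, hr, hw⟩
    obtain ⟨f, hf0, hstep, hfc⟩ := hr.exists_cfgs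
    exact ⟨⟨f, hf0, hstep⟩, by simpa [PlaySeq.final, hfc] using hw⟩

def PlayedInDeck (σ : List Card) (p : ℕ → ℕ) : Prop :=
  ∀ a, 1 ≤ a → a ≤ p 1 → (a, 1) ∈ σ

lemma PlayedInDeck.update {σ : List Card} {p : ℕ → ℕ} {j : ℕ} (hp : PlayedInDeck σ p)
    (hplay : p (nth σ j).2 + 1 = (nth σ j).1) :
    PlayedInDeck σ (Function.update p (nth σ j).2 (nth σ j).1) := by
  intro a ha1 ha
  by_cases hcol : (nth σ j).2 = 1
  · rw [hcol, Function.update_self] at ha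
    rw [hcol] at hplay
    rcases Nat.lt_or_eq_of_le ha with ha | rfl
    · exact hp a ha1 (by omega)
    · rw [← hcol]
      exact nth_mem_s4 (lt_length_of_play hplay)
  · rw [Function.update_of_ne (Ne.symm hcol)] at ha
    exact hp a ha1 ha

lemma PlayFromHand.playedInDeck {σ : List Card} {c c' : Config} (hp : PlayFromHand σ c c')
    (hc : PlayedInDeck σ c.played) : PlayedInDeck σ c'.played := by
  induction hp with
  | refl => exact hc
  | play _ _ _ _ hplay _ ih => exact ih (hc.update hplay)

lemma Reachable.playedInDeck {σ : List Card} {h i : ℕ} {c : Config} (hr : Reachable σ h i c) :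
    PlayedInDeck σ c.played := by
  induction hr with
  | initial => intro a ha1 ha; simp [Config.initial] at ha; omega
  | step _ hs ih =>
    cases hs with
    | discard | store => exact ih
    | playNow _ hplay htail => exact htail.playedInDeck (ih.update hplay)

lemma Winnable.mem {σ : List Card} {h n : ℕ} (hw : Winnable σ h n) {a : ℕ} (ha1 : 1 ≤ a)
    (han : a ≤ n) : (a, 1) ∈ σ := by
  obtain ⟨c, hr, hn⟩ := hw
  exact hr.playedInDeck a ha1 (han.trans hn)

/-- Position `j` of `σ.eraseIdx d` is position `succAbove d j` of `σ` (as `Fin.succAbove`). -/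
def succAbove (d j : ℕ) : ℕ := if j < d then j else j + 1

def predAbove (d j : ℕ) : ℕ := if j ≤ d then j else j - 1

lemma succAbove_injective (d : ℕ) : (succAbove d).Injective := by
  intro x y hxy
  unfold succAbove at hxy
  split_ifs at hxy <;> omega

lemma succAbove_eq_iff {d j x : ℕ} (hj : j ≠ d) : succAbove d x = j ↔ x = predAbove d j := by
  unfold succAbove predAbove
  split_ifs <;> omega

lemma succAbove_predAbove {d j : ℕ} (hj : j ≠ d) : succAbove d (predAbove d j) = j :=
  (succAbove_eq_iff hj).2 rfl

lemma succAbove_ne (d j : ℕ) : succAbove d j ≠ d := by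
  unfold succAbove
  split_ifs <;> omega

lemma predAbove_succ {d i : ℕ} (hi : i ≠ d) : predAbove d (i + 1) = predAbove d i + 1 := by
  unfold predAbove
  split_ifs <;> omega

lemma nth_eraseIdx {σ : List Card} {d : ℕ} (hd : d < σ.length) (j : ℕ) :
    nth (σ.eraseIdx d) j = nth σ (succAbove d j) := by
  have hlen := List.length_eraseIdx_of_lt hd
  unfold succAbove
  by_cases hj : j < (σ.eraseIdx d).length
  · rw [nth_of_lt hj, List.getElem_eraseIdx]
    split_ifs <;> exact (nth_of_lt (by omega)).symm
  · rw [nth_of_le (not_lt.1 hj), nth_of_le (by split_ifs <;> omega)]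

namespace Config

/-- A configuration for `σ.eraseIdx d`, read as one for `σ`. -/
def insertIdx (d : ℕ) (c : Config) : Config :=
  ⟨c.played, c.hand.image (succAbove d), c.done.image (succAbove d)⟩

/-- Positions of `S ⊆ ℕ` in `σ`, read as positions in `σ.eraseIdx d` (forgetting `d`). -/
noncomputable def erasePos (d : ℕ) (S : Finset ℕ) : Finset ℕ :=
  S.preimage (succAbove d) (succAbove_injective d).injOn

noncomputable def eraseIdx (d : ℕ) (c : Config) : Config :=
  ⟨c.played, erasePos d c.hand, erasePos d c.done⟩

@[simp]
lemma mem_erasePos {d x : ℕ} {S : Finset ℕ} : x ∈ erasePos d S ↔ succAbove d x ∈ S :=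
  Finset.mem_preimage

lemma erasePos_insert {d j : ℕ} (hj : j ≠ d) (S : Finset ℕ) :
    erasePos d (insert j S) = insert (predAbove d j) (erasePos d S) := by
  ext x
  simp [succAbove_eq_iff hj]

lemma erasePos_erase {d j : ℕ} (hj : j ≠ d) (S : Finset ℕ) :
    erasePos d (S.erase j) = (erasePos d S).erase (predAbove d j) := by
  ext x
  simp [succAbove_eq_iff hj]

lemma erasePos_insert_self (d : ℕ) (S : Finset ℕ) : erasePos d (insert d S) = erasePos d S := by
  ext x
  simp [succAbove_ne]

lemma card_erasePos_le (d : ℕ) (S : Finset ℕ) : (erasePos d S).card ≤ S.card :=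
  Finset.card_le_card_of_injOn _ (fun _ hx => mem_erasePos.1 hx)
    (succAbove_injective d).injOn

end Config

section Insert

variable {σ : List Card} {d : ℕ} (hd : d < σ.length)
include hd

lemma PlayFromHand.insertIdx {c c' : Config} (hp : PlayFromHand (σ.eraseIdx d) c c') :
    PlayFromHand σ (c.insertIdx d) (c'.insertIdx d) := by
  induction hp with
  | refl => exact .refl _
  | play c c' j hj hplay _ ih =>
    rw [nth_eraseIdx hd] at hplay ih
    refine .play _ _ (succAbove d j) (Finset.mem_image_of_mem _ hj) hplay ?_
    simpa [Config.insertIdx, Finset.image_erase (succAbove_injective d)] using ih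

lemma Step.insertIdx {h i : ℕ} {c c' : Config} (hs : Step (σ.eraseIdx d) h i c c') :
    Step σ h (succAbove d i) (c.insertIdx d) (c'.insertIdx d) := by
  cases hs with
  | discard => exact .discard _
  | store hsize =>
    have hst := Step.store (σ := σ) (h := h) (i := succAbove d i) (c.insertIdx d)
      (by rwa [Config.insertIdx, ← Finset.image_insert,
        Finset.card_image_of_injective _ (succAbove_injective d)])
    simpa [Config.insertIdx] using hst
  | playNow _ hplay htail =>
    rw [nth_eraseIdx hd] at hplay htail
    refine .playNow _ _ hplay ?_
    simpa [Config.insertIdx] using htail.insertIdx hd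

lemma Reachable.insertIdx {h i : ℕ} {c : Config} (hr : Reachable (σ.eraseIdx d) h i c) :
    Reachable σ h (succAbove d i) (c.insertIdx d) := by
  induction hr with
  | initial => exact Reachable.of_le (by simpa [Config.insertIdx] using .initial) (Nat.zero_le _)
  | @step i _ _ _ hs ih =>
    exact (ih.step (hs.insertIdx hd)).of_le (by unfold succAbove; split_ifs <;> omega)

lemma Winnable.of_eraseIdx {h n : ℕ} (hw : Winnable (σ.eraseIdx d) h n) : Winnable σ h n := by
  obtain ⟨c, hr, hn⟩ := hw
  refine ⟨c.insertIdx d, ?_, hn⟩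
  have := hr.insertIdx hd
  rwa [List.length_eraseIdx_of_lt hd, succAbove, if_neg (by omega),
    Nat.sub_add_cancel (by omega)] at this

end Insert

lemma Step.eraseIdx_self {σ : List Card} {h d : ℕ} {c c' : Config} (hs : Step σ h d c c')
    (hdc : d ∉ c'.done) : c'.eraseIdx d = c.eraseIdx d := by
  cases hs with
  | discard => rfl
  | store => simp [Config.eraseIdx, Config.erasePos_insert_self]
  | playNow _ _ htail => exact absurd (htail.done_subset (Finset.mem_insert_self _ _)) hdc

section Erase

variable {σ : List Card} {d : ℕ} (hd : d < σ.length)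
include hd

lemma PlayFromHand.eraseIdx {c c' : Config} (hp : PlayFromHand σ c c') (hdc : d ∉ c'.done) :
    PlayFromHand (σ.eraseIdx d) (c.eraseIdx d) (c'.eraseIdx d) := by
  induction hp with
  | refl => exact .refl _
  | play c c' j hj hplay htail ih =>
    have hjd : j ≠ d := by
      rintro rfl
      exact hdc (htail.done_subset (Finset.mem_insert_self _ _))
    have hnth : nth (σ.eraseIdx d) (predAbove d j) = nth σ j := by
      rw [nth_eraseIdx hd, succAbove_predAbove hjd]
    have hj' : predAbove d j ∈ (c.eraseIdx d).hand := by
      simpa [Config.eraseIdx, succAbove_predAbove hjd] using hj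
    refine .play _ _ (predAbove d j) hj' (by rwa [hnth]) ?_
    simpa [Config.eraseIdx, hnth, Config.erasePos_insert hjd, Config.erasePos_erase hjd]
      using ih hdc

lemma Step.eraseIdx {h i : ℕ} (hid : i ≠ d) {c c' : Config} (hs : Step σ h i c c')
    (hdc : d ∉ c'.done) :
    Step (σ.eraseIdx d) h (predAbove d i) (c.eraseIdx d) (c'.eraseIdx d) := by
  have hnth : nth (σ.eraseIdx d) (predAbove d i) = nth σ i := by
    rw [nth_eraseIdx hd, succAbove_predAbove hid]
  cases hs with
  | discard => exact .discard _
  | store hsize =>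
    have hst := Step.store (σ := σ.eraseIdx d) (h := h) (i := predAbove d i) (c.eraseIdx d)
      (by simpa [Config.eraseIdx, Config.erasePos_insert hid] using
        (Config.card_erasePos_le d _).trans hsize)
    simpa [Config.eraseIdx, Config.erasePos_insert hid] using hst
  | playNow _ hplay htail =>
    refine .playNow _ _ (by rwa [hnth]) ?_
    simpa [Config.eraseIdx, hnth, Config.erasePos_insert hid] using htail.eraseIdx hd hdc

lemma Reachable.eraseIdx {h i : ℕ} {c : Config} (hr : Reachable σ h i c) (hdc : d ∉ c.done) :
    Reachable (σ.eraseIdx d) h (predAbove d i) (c.eraseIdx d) := by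
  induction hr with
  | initial => simpa [Config.eraseIdx, Config.erasePos, Config.initial, predAbove] using .initial
  | @step i c c' _ hs ih =>
    have ih := ih (fun hc => hdc (hs.done_subset hc))
    by_cases hid : i = d
    · subst hid
      rwa [hs.eraseIdx_self hdc, show predAbove i (i + 1) = predAbove i i by simp [predAbove]]
    · rw [predAbove_succ hid]
      exact ih.step (hs.eraseIdx hd hid hdc)

end Erase

def Blocked (σ : List Card) (W : Finset ℕ) (c : Config) : Prop :=
  ∃ w ∈ W, c.played 1 < w ∧ ∀ j ∈ c.hand, (nth σ j).1 ≠ w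

lemma blocked_of_card_hand_lt {σ : List Card} {W : Finset ℕ} {c : Config}
    (hW : c.hand.card < W.card) (hWval : ∀ x ∈ W, c.played 1 < x) : Blocked σ W c := by
  obtain ⟨w, hw, hwH⟩ := Finset.exists_mem_notMem_of_card_lt_card
    (Finset.card_image_le.trans_lt hW : (c.hand.image fun j => (nth σ j).1).card < W.card)
  exact ⟨w, hw, hWval w hw, fun j hj hjw => hwH (Finset.mem_image.2 ⟨j, hj, hjw⟩)⟩

lemma Blocked.of_play {σ : List Card} {W : Finset ℕ} {c c' : Config} (hb : Blocked σ W c)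
    (hplayed : c'.played 1 = c.played 1 + 1) (hhand : c'.hand ⊆ c.hand)
    (hnext : ∀ w ∈ W, (∀ j ∈ c.hand, (nth σ j).1 ≠ w) → c.played 1 + 1 ≠ w) :
    Blocked σ W c' := by
  obtain ⟨w, hw, hlt, hwH⟩ := hb
  have := hnext w hw hwH
  exact ⟨w, hw, by omega, fun j hj => hwH j (hhand hj)⟩

section Useless

variable {σ : List Card} {n h d : ℕ} {W : Finset ℕ} (hval : ValidDeck σ n 1)
  (hW : W.card = h + 1) (hWval : ∀ x ∈ W, (nth σ d).1 < x)
include hval hW hWval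

lemma PlayFromHand.blocked {c c' : Config} (hp : PlayFromHand σ c c') (hcard : c.hand.card ≤ h)
    (hb : d ∈ c.done → Blocked σ W c) : d ∈ c'.done → Blocked σ W c' := by
  induction hp with
  | refl => exact hb
  | play c c' j hj hplay _ ih =>
    rw [hval.color_eq_one (lt_length_of_play hplay)] at hplay ih
    refine ih ((Finset.card_erase_le).trans hcard) ?_
    simp only [Finset.mem_insert]
    rintro (rfl | hd)
    · exact blocked_of_card_hand_lt (by simp only [Finset.card_erase_of_mem hj]; omega)
        (by simpa using hWval)
    · exact (hb hd).of_play (by simp [hplay]) (Finset.erase_subset _ _)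
        (fun w _ hw => hplay ▸ hw j hj)

lemma Step.blocked (hWafter : ∀ j, d < j → (nth σ j).1 ∉ W) {i : ℕ} {c c' : Config}
    (hs : Step σ h i c c') (hcard : c.hand.card ≤ h) (hdi : d ∈ c.done → d < i)
    (hb : d ∈ c.done → Blocked σ W c) : d ∈ c'.done → Blocked σ W c' := by
  cases hs with
  | discard => exact hb
  | store =>
    intro hd
    obtain ⟨w, hw, hlt, hwH⟩ := hb hd
    refine ⟨w, hw, hlt, fun j hj => ?_⟩
    rcases Finset.mem_insert.1 hj with rfl | hj
    · exact fun hjw => hWafter j (hdi hd) (hjw ▸ hw)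
    · exact hwH j hj
  | playNow _ hplay htail =>
    rw [hval.color_eq_one (lt_length_of_play hplay)] at hplay htail
    refine htail.blocked hval hW hWval hcard ?_
    simp only [Finset.mem_insert]
    rintro (rfl | hd)
    · exact blocked_of_card_hand_lt (by simp only; omega) (by simpa using hWval)
    · exact (hb hd).of_play (by simp [hplay]) subset_rfl
        (fun w hw _ hiw => hWafter i (hdi hd) (hplay ▸ hiw ▸ hw))

lemma Reachable.blocked (hWafter : ∀ j, d < j → (nth σ j).1 ∉ W) {i : ℕ} {c : Config}
    (hr : Reachable σ h i c) : d ∈ c.done → Blocked σ W c := by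
  induction hr with
  | initial => simp [Config.initial]
  | step hr hs ih =>
    exact hs.blocked hval hW hWval hWafter hr.card_hand_le
      (fun hd => hr.lt_of_mem d (Finset.mem_union_right _ hd)) ih

end Useless

lemma Reachable.notMem_done_of_useless {σ : List Card} {n h d i : ℕ} {c : Config}
    (hval : ValidDeck σ n 1) (hu : Useless σ h n d) (hr : Reachable σ h i c)
    (hn : n ≤ c.played 1) : d ∉ c.done := by
  obtain ⟨W, hW, hWval, hWafter⟩ := hu
  have hWafter' : ∀ j, d < j → (nth σ j).1 ∉ W := by
    intro j hdj hjW
    by_cases hj : j < σ.length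
    · exact hWafter j hdj hj hjW
    · rw [nth_of_le (not_lt.1 hj)] at hjW
      exact absurd (hWval _ hjW).1 (Nat.not_lt_zero _)
  intro hd
  obtain ⟨w, hw, hlt, -⟩ := hr.blocked hval hW (fun x hx => (hWval x hx).1) hWafter' hd
  have := (hWval w hw).2
  omega

lemma Winnable.eraseIdx_of_useless {σ : List Card} {n h d : ℕ} (hval : ValidDeck σ n 1)
    (hd : d < σ.length) (hu : Useless σ h n d) (hw : Winnable σ h n) :
    Winnable (σ.eraseIdx d) h n := by
  obtain ⟨c, hr, hn⟩ := hw
  refine ⟨c.eraseIdx d, ?_, hn⟩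
  have := hr.eraseIdx hd (hr.notMem_done_of_useless hval hu hn)
  rwa [predAbove, if_neg (by omega), ← List.length_eraseIdx_of_lt hd] at this

lemma useless_of_lt_card {σ : List Card} {h n i : ℕ} {W : Finset ℕ} (hW : h < W.card)
    (hWval : ∀ x ∈ W, (nth σ i).1 < x ∧ x ≤ n)
    (hWafter : ∀ j, i < j → j < σ.length → (nth σ j).1 ∉ W) : Useless σ h n i := by
  obtain ⟨W', hW', hcard⟩ := Finset.exists_subset_card_eq (Nat.succ_le_of_lt hW)
  exact ⟨W', hcard, fun x hx => hWval x (hW' hx),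
    fun j hij hj hjW => hWafter j hij hj (hW' hjW)⟩

def OccursFrom (τ : List Card) (a i : ℕ) : Prop :=
  ∃ j, i ≤ j ∧ j < τ.length ∧ (nth τ j).1 = a

def IsLastOcc (τ : List Card) (j : ℕ) : Prop :=
  ¬ OccursFrom τ (nth τ j).1 (j + 1)

lemma IsLastOcc.eq {τ : List Card} {j k : ℕ} (hj : IsLastOcc τ j) (hk : IsLastOcc τ k)
    (hjl : j < τ.length) (hkl : k < τ.length) (hv : (nth τ j).1 = (nth τ k).1) : j = k := by
  by_contra hne
  rcases Nat.lt_or_gt_of_ne hne with hjk | hkj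
  · exact hj ⟨k, hjk, hkl, hv.symm⟩
  · exact hk ⟨j, hkj, hjl, hv⟩

lemma OccursFrom.exists_isLastOcc {τ : List Card} {a i : ℕ} (ho : OccursFrom τ a i) :
    ∃ j, i ≤ j ∧ j < τ.length ∧ (nth τ j).1 = a ∧ IsLastOcc τ j := by
  classical
  obtain ⟨j₀, hij₀, hj₀, hv₀⟩ := ho
  set S := (Finset.range τ.length).filter fun j => i ≤ j ∧ (nth τ j).1 = a
  have hS : S.Nonempty := ⟨j₀, by simp [S, hij₀, hj₀, hv₀]⟩
  obtain ⟨j, hj, hmax⟩ := S.exists_max_image id hS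
  simp only [S, Finset.mem_filter, Finset.mem_range] at hj hmax
  refine ⟨j, hj.2.1, hj.1, hj.2.2, ?_⟩
  rintro ⟨k, hk, hkl, hkv⟩
  have := hmax k ⟨hkl, by omega, hj.2.2 ▸ hkv⟩
  simp only [id] at this
  omega

lemma occursFrom_zero_of_mem {τ : List Card} {a : ℕ} (ha : (a, 1) ∈ τ) :
    OccursFrom τ a 0 := by
  obtain ⟨j, hj, hget⟩ := List.mem_iff_getElem.1 ha
  exact ⟨j, Nat.zero_le _, hj, by rw [nth_of_lt hj, hget]⟩

open Classical in
noncomputable def greedyHand (τ : List Card) (m p : ℕ) : Finset ℕ :=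
  (Finset.range m).filter fun j => p < (nth τ j).1 ∧ IsLastOcc τ j

@[simp]
lemma mem_greedyHand {τ : List Card} {m p j : ℕ} :
    j ∈ greedyHand τ m p ↔ j < m ∧ p < (nth τ j).1 ∧ IsLastOcc τ j := by
  simp [greedyHand]

def GreedyInv (τ : List Card) (n m : ℕ) (c : Config) : Prop :=
  c.hand = greedyHand τ m (c.played 1) ∧ (c.played 1 < n → OccursFrom τ (c.played 1 + 1) m)

lemma greedyHand_erase {τ : List Card} {m p j : ℕ} (hjl : j < τ.length)
    (hjv : (nth τ j).1 = p + 1) (hjlast : IsLastOcc τ j) :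
    (greedyHand τ m p).erase j = greedyHand τ m (p + 1) := by
  ext x
  simp only [Finset.mem_erase, mem_greedyHand]
  constructor
  · rintro ⟨hxj, hxm, hpx, hxlast⟩
    have hxl : x < τ.length := lt_length_of_value_pos (by omega)
    exact ⟨hxm, lt_of_le_of_ne hpx fun hx => hxj (hxlast.eq hjlast hxl hjl (by omega)), hxlast⟩
  · rintro ⟨hxm, hpx, hxlast⟩
    exact ⟨by rintro rfl; omega, hxm, by omega, hxlast⟩

lemma greedyHand_succ_of_play {τ : List Card} {i p : ℕ} (hi : i < τ.length)
    (hplay : (nth τ i).1 = p + 1) : greedyHand τ (i + 1) (p + 1) = greedyHand τ i p := by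
  ext x
  simp only [mem_greedyHand]
  constructor
  · rintro ⟨hxi, hpx, hxlast⟩
    exact ⟨lt_of_le_of_ne (Nat.lt_succ_iff.1 hxi) (by rintro rfl; omega), by omega, hxlast⟩
  · rintro ⟨hxi, hpx, hxlast⟩
    exact ⟨by omega, lt_of_le_of_ne hpx fun hx => hxlast ⟨i, hxi, hi, by omega⟩, hxlast⟩

lemma greedyHand_succ_of_keep {τ : List Card} {i p : ℕ}
    (hkeep : p < (nth τ i).1 ∧ IsLastOcc τ i) :
    greedyHand τ (i + 1) p = insert i (greedyHand τ i p) := by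
  ext x
  simp only [Finset.mem_insert, mem_greedyHand]
  constructor
  · rintro ⟨hxi, hx⟩
    rcases Nat.lt_succ_iff_lt_or_eq.1 hxi with hxi | rfl
    · exact Or.inr ⟨hxi, hx⟩
    · exact Or.inl rfl
  · rintro (rfl | ⟨hxi, hx⟩)
    · exact ⟨by omega, hkeep⟩
    · exact ⟨by omega, hx⟩

lemma greedyHand_succ_of_not_keep {τ : List Card} {i p : ℕ}
    (hkeep : ¬ (p < (nth τ i).1 ∧ IsLastOcc τ i)) :
    greedyHand τ (i + 1) p = greedyHand τ i p := by
  ext x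
  simp only [mem_greedyHand]
  constructor
  · rintro ⟨hxi, hx⟩
    exact ⟨lt_of_le_of_ne (Nat.lt_succ_iff.1 hxi) (by rintro rfl; exact hkeep hx), hx⟩
  · rintro ⟨hxi, hx⟩
    exact ⟨by omega, hx⟩

section Greedy

variable {τ : List Card} {n h : ℕ} (hval : ValidDeck τ n 1)
include hval

/- The next value `p + 1` occurs at some `j₀ > i`; if storing card `i` overflowed the hand,
the values of the hand and of card `i` would make card `j₀` useless. -/
lemma card_insert_greedyHand_le (hnone : ∀ i < τ.length, ¬ Useless τ h n i) {i p : ℕ}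
    (hi : i < τ.length) (hnext : OccursFrom τ (p + 1) i) (hv : p + 1 < (nth τ i).1)
    (hlast : IsLastOcc τ i) : (insert i (greedyHand τ i p)).card ≤ h := by
  obtain ⟨j₀, hij₀, hj₀, hv₀⟩ := hnext
  have hij₀ : i < j₀ := lt_of_le_of_ne hij₀ (by rintro rfl; omega)
  set S := insert i (greedyHand τ i p)
  have hS : ∀ x ∈ S, x ≤ i ∧ x < τ.length ∧ p + 1 < (nth τ x).1 ∧ IsLastOcc τ x := by
    intro x hx
    rcases Finset.mem_insert.1 hx with rfl | hx
    · exact ⟨le_rfl, hi, hv, hlast⟩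
    · obtain ⟨hxi, hpx, hxlast⟩ := mem_greedyHand.1 hx
      refine ⟨hxi.le, lt_length_of_value_pos (by omega), ?_, hxlast⟩
      exact lt_of_le_of_ne hpx fun hx => hxlast ⟨j₀, by omega, hj₀, by omega⟩
  by_contra hcard
  refine hnone j₀ hj₀ (useless_of_lt_card (W := S.image fun x => (nth τ x).1) ?_ ?_ ?_)
  · rw [Finset.card_image_of_injOn fun x hx y hy hxy =>
      (hS x hx).2.2.2.eq (hS y hy).2.2.2 (hS x hx).2.1 (hS y hy).2.1 hxy]
    omega
  · simp only [Finset.mem_image]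
    rintro _ ⟨x, hx, rfl⟩
    exact ⟨by have := (hS x hx).2.2.1; omega, hval.value_le (hS x hx).2.1⟩
  · simp only [Finset.mem_image, not_exists, not_and]
    intro j hj₀j hj x hx hxj
    exact (hS x hx).2.2.2 ⟨j, by have := (hS x hx).1; omega, hj, hxj.symm⟩

variable (hall : ∀ a, 1 ≤ a → a ≤ n → (a, 1) ∈ τ)
include hall

/- Play from the hand as long as the next value no longer occurs among the cards to come:
its last card has then been seen, and was kept. -/
lemma exists_playFromHand_greedyInv {m : ℕ} (c : Config)
    (hc : c.hand = greedyHand τ m (c.played 1)) :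
    ∃ c', PlayFromHand τ c c' ∧ GreedyInv τ n m c' := by
  by_cases hstop : c.played 1 < n → OccursFrom τ (c.played 1 + 1) m
  · exact ⟨c, .refl c, hc, hstop⟩
  obtain ⟨hpn, hnot⟩ := Classical.not_imp.1 hstop
  obtain ⟨j, -, hjl, hjv, hjlast⟩ :=
    (occursFrom_zero_of_mem (hall (c.played 1 + 1) (by omega) (by omega))).exists_isLastOcc
  have hjm : j < m := by
    by_contra hjm
    exact hnot ⟨j, by omega, hjl, hjv⟩
  have hcol := hval.color_eq_one hjl
  have hj : j ∈ c.hand := by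
    rw [hc, mem_greedyHand]
    exact ⟨hjm, by omega, hjlast⟩
  set c₁ : Config :=
    ⟨Function.update c.played (nth τ j).2 (nth τ j).1, c.hand.erase j, insert j c.done⟩
  have hc₁ : c₁.played 1 = c.played 1 + 1 := by simp [c₁, hcol, hjv]
  have hhand₁ : c₁.hand = greedyHand τ m (c₁.played 1) := by
    rw [hc₁, ← greedyHand_erase hjl hjv hjlast, ← hc]
  obtain ⟨c', hp, hinv⟩ := exists_playFromHand_greedyInv c₁ hhand₁
  exact ⟨c', .play _ _ j hj (by rw [hcol, hjv]) hp, hinv⟩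
termination_by n - c.played 1
decreasing_by simp only [hcol, hjv, Function.update_self]; omega

lemma exists_step_greedyInv (hnone : ∀ i < τ.length, ¬ Useless τ h n i) {i : ℕ}
    (hi : i < τ.length) {c : Config} (hc : GreedyInv τ n i c) :
    ∃ c', Step τ h i c c' ∧ GreedyInv τ n (i + 1) c' := by
  obtain ⟨hhand, hnext⟩ := hc
  have hcol := hval.color_eq_one hi
  by_cases hplay : (nth τ i).1 = c.played 1 + 1
  · set c₁ : Config :=
      ⟨Function.update c.played (nth τ i).2 (nth τ i).1, c.hand, insert i c.done⟩
    have hc₁ : c₁.played 1 = c.played 1 + 1 := by simp [c₁, hcol, hplay]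
    have hhand₁ : c₁.hand = greedyHand τ (i + 1) (c₁.played 1) := by
      rw [hc₁, greedyHand_succ_of_play hi hplay, ← hhand]
    obtain ⟨c', hp, hinv⟩ := exists_playFromHand_greedyInv hval hall c₁ hhand₁
    exact ⟨c', .playNow _ _ (by rw [hcol]; omega) hp, hinv⟩
  have hnext' : c.played 1 < n → OccursFrom τ (c.played 1 + 1) (i + 1) := by
    intro hpn
    obtain ⟨j, hij, hjl, hjv⟩ := hnext hpn
    exact ⟨j, lt_of_le_of_ne hij (by rintro rfl; exact hplay hjv), hjl, hjv⟩
  by_cases hkeep : c.played 1 < (nth τ i).1 ∧ IsLastOcc τ i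
  · refine ⟨⟨c.played, insert i c.hand, c.done⟩, .store _ ?_, ?_, hnext'⟩
    · rw [hhand]
      refine card_insert_greedyHand_le hval hnone hi (hnext ?_) (by omega) hkeep.2
      exact lt_of_lt_of_le hkeep.1 (hval.value_le hi)
    · rw [greedyHand_succ_of_keep hkeep, ← hhand]
  · exact ⟨c, .discard c, by rw [greedyHand_succ_of_not_keep hkeep, ← hhand], hnext'⟩

lemma exists_reachable_greedyInv (hnone : ∀ i < τ.length, ¬ Useless τ h n i) :
    ∀ i ≤ τ.length, ∃ c, Reachable τ h i c ∧ GreedyInv τ n i c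
  | 0, _ => by
    refine ⟨_, .initial, by ext; simp [Config.initial], fun hn => occursFrom_zero_of_mem ?_⟩
    exact hall 1 le_rfl (by simpa [Config.initial] using hn : 0 < n)
  | i + 1, hi => by
    obtain ⟨c, hr, hc⟩ := exists_reachable_greedyInv hnone i (by omega)
    obtain ⟨c', hs, hc'⟩ := exists_step_greedyInv hval hall hnone (by omega) hc
    exact ⟨c', hr.step hs, hc'⟩

end Greedy

lemma winnable_of_forall_mem {τ : List Card} {n h : ℕ} (hval : ValidDeck τ n 1)
    (hnone : ∀ i < τ.length, ¬ Useless τ h n i)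
    (hall : ∀ a, 1 ≤ a → a ≤ n → (a, 1) ∈ τ) : Winnable τ h n := by
  obtain ⟨c, hr, -, hnext⟩ := exists_reachable_greedyInv hval hall hnone τ.length le_rfl
  refine ⟨c, hr, not_lt.1 fun hlt => ?_⟩
  obtain ⟨j, hj, hjl, -⟩ := hnext hlt
  omega

lemma winnable_iff_of_reflTransGen {σ τ : List Card} {n h : ℕ} (hval : ValidDeck σ n 1)
    (hreach : Relation.ReflTransGen (DeleteUselessStep h n) σ τ) :
    ValidDeck τ n 1 ∧ (Winnable σ h n ↔ Winnable τ h n) := by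
  induction hreach with
  | refl => exact ⟨hval, Iff.rfl⟩
  | tail _ hstep ih =>
    obtain ⟨hval', hiff⟩ := ih
    obtain ⟨d, hd, hu, rfl⟩ := hstep
    exact ⟨hval'.eraseIdx d,
      hiff.trans ⟨Winnable.eraseIdx_of_useless hval' hd hu, Winnable.of_eraseIdx hd⟩⟩

/-- In the single-color case, let `σ*` be obtained from `σ` by
repeatedly deleting a (currently) useless card until no useless card remains. Then `σ`
has a winning play sequence with hand size `h` iff `σ*` contains every value `1,…,n`. -/
theorem winning_iff_filtered_contains_all_values
    (n h : ℕ) (σ σs : List Card) (hval : ValidDeck σ n 1)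
    (hreach : Relation.ReflTransGen (DeleteUselessStep h n) σ σs)
    (hnone : ∀ i < σs.length, ¬ Useless σs h n i) :
    (∃ ps : PlaySeq σ h Config.initial, ps.Winning n 1) ↔
      (∀ a, 1 ≤ a → a ≤ n → (a, 1) ∈ σs) := by
  obtain ⟨hvalid, hiff⟩ := winnable_iff_of_reflTransGen hval hreach
  rw [exists_winning_playSeq_iff, hiff]
  exact ⟨fun hw a ha1 han => hw.mem ha1 han, winnable_of_forall_mem hvalid hnone⟩
end

section
/- Let v be a positive integer and let σ₁ be the variable-gadget deck over 2v+1 colors. Then for every i ≤ v, no play sequence of σ₁ with hand size 2 plays all three of the following cards: the card of value 2 of color 2i−1, the card of value 2 of color 2i, and the card of value 2 of color 2v+1. -/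
/-- The variable gadget for variable `i` (`1 ≤ i ≤ v`), using colors `2i-1` and `2i`:
the block `2, 2̄, 1, 3, 4, 5, 1̄, 3̄, 4̄, 5̄`. -/
def varBlock (i : ℕ) : List Card :=
  [(2, 2*i-1), (2, 2*i), (1, 2*i-1), (3, 2*i-1), (4, 2*i-1), (5, 2*i-1),
   (1, 2*i), (3, 2*i), (4, 2*i), (5, 2*i)]

/-- The variable-gadget deck `σ₁` over `2v+1` colors: the card `(2, 2v+1)`, the blocks
`V_1, …, V_v`, and the card `(1, 2v+1)`. -/
def sigma1 (v : ℕ) : List Card :=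
  [(2, 2*v+1)] ++ ((List.range v).flatMap fun i => varBlock (i + 1)) ++ [(1, 2*v+1)]

lemma flat_len (v : ℕ) : ((List.range v).flatMap fun i => varBlock (i + 1)).length = 10*v := by
  induction v with
  | zero => rfl
  | succ v ih =>
    rw [List.range_succ, List.flatMap_append, List.length_append, ih]
    have : ([v].flatMap fun i => varBlock (i + 1)).length = 10 := by simp [varBlock]
    omega

lemma sigma1_len (v : ℕ) : (sigma1 v).length = 10*v + 2 := by
  rw [sigma1, List.length_append, List.length_append, flat_len, List.length_singleton,
    List.length_singleton]
  omega

lemma flat_getD (v b r : ℕ) (hb : b < v) (hr : r < 10) :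
    ((List.range v).flatMap fun i => varBlock (i + 1)).getD (10*b+r) (0,0)
      = (varBlock (b+1)).getD r (0,0) := by
  induction v with
  | zero => omega
  | succ v ih =>
    rw [List.range_succ, List.flatMap_append]
    rcases Nat.lt_or_ge b v with h | h
    · rw [List.getD_append _ _ _ _ (by rw [flat_len]; omega), ih h]
    · have hb' : b = v := by omega
      subst hb'
      rw [List.getD_append_right _ _ _ _ (by rw [flat_len]; omega)]
      rw [flat_len]
      congr 1
      omega

lemma nth_zero (v : ℕ) : nth (sigma1 v) 0 = (2, 2*v+1) := rfl

lemma nth_mid (v b r : ℕ) (hb : b < v) (hr : r < 10) :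
    nth (sigma1 v) (1 + (10*b + r)) = (varBlock (b+1)).getD r (0,0) := by
  unfold nth sigma1
  rw [List.getD_append _ _ _ _ (by rw [List.length_append, flat_len]; simp; omega)]
  rw [show 1 + (10*b+r) = (10*b+r) + 1 by omega, List.singleton_append, List.getD_cons_succ]
  exact flat_getD v b r hb hr

lemma nth_last (v : ℕ) : nth (sigma1 v) (10*v+1) = (1, 2*v+1) := by
  unfold nth sigma1
  rw [List.getD_append_right _ _ _ _ (by rw [List.length_append, flat_len]; simp; omega)]
  rw [List.length_append, flat_len, List.length_singleton,
    show 10*v+1 - (1 + 10*v) = 0 from by omega]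
  rfl

lemma nth_big (v j : ℕ) (hj : 10*v+2 ≤ j) : nth (sigma1 v) j = (0,0) := by
  unfold nth
  rw [List.getD_eq_default]
  rw [sigma1_len]; omega

section Uniq
variable {v i j : ℕ} (hi1 : 1 ≤ i) (hiv : i ≤ v)

lemma jcases (P : Prop) (hj0 : j = 0 → P)
    (hjm : ∀ b r, b < v → r < 10 → j = 1 + (10*b+r) → P)
    (hjl : j = 10*v+1 → P) (hjb : 10*v+2 ≤ j → P) : P := by
  rcases Nat.eq_zero_or_pos j with rfl | h0
  · exact hj0 rfl
  rcases Nat.lt_or_ge j (10*v+1) with h1 | h1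
  · exact hjm ((j-1)/10) ((j-1)%10) (by omega) (by omega) (by omega)
  rcases Nat.lt_or_ge j (10*v+2) with h2 | h2
  · exact hjl (by omega)
  · exact hjb h2

include hi1 hiv in
lemma uniq_1odd (h : nth (sigma1 v) j = (1, 2*i-1)) : j = 10*(i-1)+3 := by
  refine jcases (v := v) (j := j) _ ?_ ?_ ?_ ?_ <;> intro hj
  · subst hj; rw [nth_zero] at h; (simp [Prod.ext_iff] at h) <;> omega
  · intro r hb hr hj'; subst hj'; rw [nth_mid v _ r hb hr] at h
    interval_cases r <;> simp [varBlock, Prod.ext_iff] at h <;> omega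
  · subst hj; rw [nth_last] at h; (simp [Prod.ext_iff] at h) <;> omega
  · rw [nth_big v j hj] at h; simp [Prod.ext_iff] at h

include hi1 hiv in
lemma uniq_2odd (h : nth (sigma1 v) j = (2, 2*i-1)) : j = 10*(i-1)+1 := by
  refine jcases (v := v) (j := j) _ ?_ ?_ ?_ ?_ <;> intro hj
  · subst hj; rw [nth_zero] at h; (simp [Prod.ext_iff] at h) <;> omega
  · intro r hb hr hj'; subst hj'; rw [nth_mid v _ r hb hr] at h
    interval_cases r <;> simp [varBlock, Prod.ext_iff] at h <;> omega
  · subst hj; rw [nth_last] at h; simp [Prod.ext_iff] at h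
  · rw [nth_big v j hj] at h; simp [Prod.ext_iff] at h

include hi1 hiv in
lemma uniq_1even (h : nth (sigma1 v) j = (1, 2*i)) : j = 10*(i-1)+7 := by
  refine jcases (v := v) (j := j) _ ?_ ?_ ?_ ?_ <;> intro hj
  · subst hj; rw [nth_zero] at h; (simp [Prod.ext_iff] at h) <;> omega
  · intro r hb hr hj'; subst hj'; rw [nth_mid v _ r hb hr] at h
    interval_cases r <;> simp [varBlock, Prod.ext_iff] at h <;> omega
  · subst hj; rw [nth_last] at h; (simp [Prod.ext_iff] at h) <;> omega
  · rw [nth_big v j hj] at h; simp [Prod.ext_iff] at h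

include hi1 hiv in
omit hiv in
lemma uniq_2even (h : nth (sigma1 v) j = (2, 2*i)) : j = 10*(i-1)+2 := by
  refine jcases (v := v) (j := j) _ ?_ ?_ ?_ ?_ <;> intro hj
  · subst hj; rw [nth_zero] at h; (simp [Prod.ext_iff] at h) <;> omega
  · intro r hb hr hj'; subst hj'; rw [nth_mid v _ r hb hr] at h
    interval_cases r <;> simp [varBlock, Prod.ext_iff] at h <;> omega
  · subst hj; rw [nth_last] at h; simp [Prod.ext_iff] at h
  · rw [nth_big v j hj] at h; simp [Prod.ext_iff] at h

lemma uniq_1dummy (h : nth (sigma1 v) j = (1, 2*v+1)) : j = 10*v+1 := by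
  refine jcases (v := v) (j := j) _ ?_ ?_ ?_ ?_ <;> intro hj
  · subst hj; rw [nth_zero] at h; simp [Prod.ext_iff] at h
  · intro r hb hr hj'; subst hj'; rw [nth_mid v _ r hb hr] at h
    interval_cases r <;> simp [varBlock, Prod.ext_iff] at h <;> omega
  · exact hj
  · rw [nth_big v j hj] at h; simp [Prod.ext_iff] at h

lemma uniq_2dummy (h : nth (sigma1 v) j = (2, 2*v+1)) : j = 0 := by
  refine jcases (v := v) (j := j) _ ?_ ?_ ?_ ?_ <;> intro hj
  · exact hj
  · intro r hb hr hj'; subst hj'; rw [nth_mid v _ r hb hr] at h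
    interval_cases r <;> simp [varBlock, Prod.ext_iff] at h <;> omega
  · subst hj; rw [nth_last] at h; simp [Prod.ext_iff] at h
  · rw [nth_big v j hj] at h; simp [Prod.ext_iff] at h

include hi1 hiv in
lemma card_q1 : nth (sigma1 v) (10*(i-1)+1) = (2, 2*i-1) := by
  have := nth_mid v (i-1) 0 (by omega) (by norm_num)
  rw [show 1 + (10*(i-1)+0) = 10*(i-1)+1 from by omega] at this
  rw [this]; simp [varBlock]; omega

include hi1 hiv in
lemma card_q2 : nth (sigma1 v) (10*(i-1)+2) = (2, 2*i) := by
  have := nth_mid v (i-1) 1 (by omega) (by norm_num)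
  rw [show 1 + (10*(i-1)+1) = 10*(i-1)+2 from by omega] at this
  rw [this]; simp [varBlock]; omega

end Uniq

section Game
variable {σ : List Card}

lemma pfh_hand {c c' : Config} (h : PlayFromHand σ c c') : c'.hand ⊆ c.hand := by
  induction h with
  | refl => exact fun _ h => h
  | play cfg cfg' j hj hplay htail ih => exact fun x hx => Finset.mem_of_mem_erase (ih hx)

lemma pfh_done {c c' : Config} (h : PlayFromHand σ c c') : c'.done ⊆ c.done ∪ c.hand := by
  induction h with
  | refl => exact Finset.subset_union_left
  | play cfg cfg' j hj hplay htail ih =>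
    intro x hx
    rcases Finset.mem_union.1 (ih hx) with hx | hx
    · rcases Finset.mem_insert.1 hx with rfl | hx
      · exact Finset.mem_union_right _ hj
      · exact Finset.mem_union_left _ hx
    · exact Finset.mem_union_right _ (Finset.mem_of_mem_erase hx)

lemma pfh_zero {k q : ℕ} (hq : nth σ q = (2, k)) {c c' : Config}
    (h : PlayFromHand σ c c') :
    c.played k = 0 → (∀ j ∈ c.hand, (nth σ j).2 = k → (nth σ j).1 ≠ 1) →
    q ∉ c.done → c'.played k = 0 ∧ q ∉ c'.done := by
  induction h with
  | refl => exact fun h1 _ h3 => ⟨h1, h3⟩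
  | play cfg cfg' j hj hplay htail ih =>
    intro h1 h2 h3
    refine ih ?_ ?_ ?_
    · show Function.update cfg.played (nth σ j).2 (nth σ j).1 k = 0
      by_cases hc : (nth σ j).2 = k
      · exfalso
        exact h2 j hj hc (by rw [hc, h1] at hplay; omega)
      · rw [Function.update_of_ne (fun hh => hc hh.symm)]
        exact h1
    · exact fun j' hj' => h2 j' (Finset.mem_of_mem_erase hj')
    · intro hmem
      rcases Finset.mem_insert.1 hmem with hqj | hmem
      · rw [← hqj, hq] at hplay
        simp only [] at hplay
        rw [h1] at hplay
        exact absurd hplay (by norm_num)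
      · exact h3 hmem

lemma pfh_le_one {k q : ℕ} (huniq : ∀ j, nth σ j = (2, k) → j = q) {c c' : Config}
    (h : PlayFromHand σ c c') :
    c.played k ≤ 1 → q ∉ c.hand → q ∉ c.done →
    c'.played k ≤ 1 ∧ q ∉ c'.hand ∧ q ∉ c'.done := by
  induction h with
  | refl => exact fun h1 h2 h3 => ⟨h1, h2, h3⟩
  | play cfg cfg' j hj hplay htail ih =>
    intro h1 h2 h3
    have hjq : j ≠ q := fun hh => h2 (hh ▸ hj)
    refine ih ?_ ?_ ?_
    · show Function.update cfg.played (nth σ j).2 (nth σ j).1 k ≤ 1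
      by_cases hc : (nth σ j).2 = k
      · rw [hc, Function.update_self]
        by_contra hgt
        have hv2 : (nth σ j).1 = 2 := by rw [hc] at hplay; omega
        exact hjq (huniq j (Prod.ext hv2 hc))
      · rw [Function.update_of_ne (fun hh => hc hh.symm)]
        exact h1
    · exact fun hh => h2 (Finset.mem_of_mem_erase hh)
    · intro hmem
      rcases Finset.mem_insert.1 hmem with hqj | hmem
      · exact hjq hqj.symm
      · exact h3 hmem

lemma step_hand_sub {h' t : ℕ} {c c' : Config} (hst : Step σ h' t c c') :
    c'.hand ⊆ insert t c.hand := by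
  cases hst with
  | discard => exact Finset.subset_insert _ _
  | store hsize => exact fun x hx => hx
  | playNow cfg' hplay htail =>
    exact fun x hx => Finset.mem_insert_of_mem (pfh_hand htail hx)

lemma step_done_sub {h' t : ℕ} {c c' : Config} (hst : Step σ h' t c c') :
    c'.done ⊆ insert t (c.done ∪ c.hand) := by
  cases hst with
  | discard => exact fun x hx => Finset.mem_insert_of_mem (Finset.mem_union_left _ hx)
  | store hsize => exact fun x hx => Finset.mem_insert_of_mem (Finset.mem_union_left _ hx)
  | playNow cfg' hplay htail =>
    intro x hx
    rcases Finset.mem_union.1 (pfh_done htail hx) with hx | hx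
    · rcases Finset.mem_insert.1 hx with rfl | hx
      · exact Finset.mem_insert_self _ _
      · exact Finset.mem_insert_of_mem (Finset.mem_union_left _ hx)
    · exact Finset.mem_insert_of_mem (Finset.mem_union_right _ hx)

lemma step_card {h' t : ℕ} {c c' : Config} (hst : Step σ h' t c c')
    (hc : c.hand.card ≤ h') : c'.hand.card ≤ h' := by
  cases hst with
  | discard => exact hc
  | store hsize => exact hsize
  | playNow cfg' hplay htail => exact le_trans (Finset.card_le_card (pfh_hand htail)) hc

lemma step_zero {k q h' t : ℕ} (hq : nth σ q = (2, k)) {c c' : Config}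
    (hst : Step σ h' t c c')
    (h1 : c.played k = 0) (h2 : ∀ j ∈ c.hand, (nth σ j).2 = k → (nth σ j).1 ≠ 1)
    (h3 : (nth σ t).2 = k → (nth σ t).1 ≠ 1) (h4 : q ∉ c.done) :
    c'.played k = 0 ∧ q ∉ c'.done := by
  cases hst with
  | discard => exact ⟨h1, h4⟩
  | store hsize => exact ⟨h1, h4⟩
  | playNow cfg' hplay htail =>
    refine pfh_zero hq htail ?_ h2 ?_
    · show Function.update c.played (nth σ t).2 (nth σ t).1 k = 0
      by_cases hc : (nth σ t).2 = k
      · exact absurd (by rw [hc, h1] at hplay; omega : (nth σ t).1 = 1) (h3 hc)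
      · rw [Function.update_of_ne (fun hh => hc hh.symm)]
        exact h1
    · intro hmem
      rcases Finset.mem_insert.1 hmem with hqt | hmem
      · rw [← hqt, hq] at hplay
        simp only [] at hplay
        rw [h1] at hplay
        exact absurd hplay (by norm_num)
      · exact h4 hmem

lemma step_le_one {k q h' t : ℕ} (huniq : ∀ j, nth σ j = (2, k) → j = q)
    {c c' : Config} (hst : Step σ h' t c c') (htq : t ≠ q)
    (h1 : c.played k ≤ 1) (h2 : q ∉ c.hand) (h3 : q ∉ c.done) :
    c'.played k ≤ 1 ∧ q ∉ c'.hand ∧ q ∉ c'.done := by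
  cases hst with
  | discard => exact ⟨h1, h2, h3⟩
  | store hsize =>
    refine ⟨h1, ?_, h3⟩
    intro hmem
    rcases Finset.mem_insert.1 hmem with hqt | hmem
    · exact htq hqt.symm
    · exact h2 hmem
  | playNow cfg' hplay htail =>
    refine pfh_le_one huniq htail ?_ h2 ?_
    · show Function.update c.played (nth σ t).2 (nth σ t).1 k ≤ 1
      by_cases hc : (nth σ t).2 = k
      · rw [hc, Function.update_self]
        by_contra hgt
        have hv2 : (nth σ t).1 = 2 := by rw [hc] at hplay; omega
        exact htq (huniq t (Prod.ext hv2 hc))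
      · rw [Function.update_of_ne (fun hh => hc hh.symm)]
        exact h1
    · intro hmem
      rcases Finset.mem_insert.1 hmem with hqt | hmem
      · exact htq hqt.symm
      · exact h3 hmem

end Game

section Run
variable {v : ℕ} (ps : PlaySeq (sigma1 v) 2 Config.initial)

lemma run_bound : ∀ t, t ≤ 10*v+2 →
    (∀ j ∈ (ps.cfgs t).hand, j < t) ∧ (∀ j ∈ (ps.cfgs t).done, j < t) := by
  intro t
  induction t with
  | zero => intro _; rw [ps.init]; simp [Config.initial]
  | succ t ih =>
    intro ht
    obtain ⟨ih1, ih2⟩ := ih (by omega)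
    have hst := ps.step t (by rw [sigma1_len]; omega)
    constructor
    · intro j hj
      rcases Finset.mem_insert.1 (step_hand_sub hst hj) with rfl | hj'
      · omega
      · exact lt_trans (ih1 j hj') (by omega)
    · intro j hj
      rcases Finset.mem_insert.1 (step_done_sub hst hj) with rfl | hj'
      · omega
      · rcases Finset.mem_union.1 hj' with hj'' | hj''
        · exact lt_trans (ih2 j hj'') (by omega)
        · exact lt_trans (ih1 j hj'') (by omega)

lemma run_card : ∀ t, t ≤ 10*v+2 → (ps.cfgs t).hand.card ≤ 2 := by
  intro t
  induction t with
  | zero => intro _; rw [ps.init]; simp [Config.initial]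
  | succ t ih =>
    intro ht
    exact step_card (ps.step t (by rw [sigma1_len]; omega)) (ih (by omega))

lemma key (k q p T : ℕ) (hq : nth (sigma1 v) q = (2, k))
    (hu1 : ∀ j, nth (sigma1 v) j = (1, k) → j = p)
    (hu2 : ∀ j, nth (sigma1 v) j = (2, k) → j = q)
    (hqT : q < T) (hTp : T ≤ p) (hTL : T ≤ 10*v+2)
    (hfin : 2 ≤ ps.final.played k) : q ∈ (ps.cfgs T).hand := by
  by_contra hqh
  have phase1 : ∀ t, t ≤ T → (ps.cfgs t).played k = 0 ∧ q ∉ (ps.cfgs t).done := by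
    intro t
    induction t with
    | zero => intro _; rw [ps.init]; exact ⟨rfl, by simp [Config.initial]⟩
    | succ t ih =>
      intro ht
      obtain ⟨h1, h3⟩ := ih (by omega)
      have hst := ps.step t (by rw [sigma1_len]; omega)
      refine step_zero hq hst h1 ?_ ?_ h3
      · intro j hj hcol hval
        have hjlt : j < t := (run_bound ps t (by omega)).1 j hj
        have hjp : j = p := hu1 j (Prod.ext hval hcol)
        omega
      · intro hcol hval
        have htp : t = p := hu1 t (Prod.ext hval hcol)
        omega
  obtain ⟨hp0, hd0⟩ := phase1 T le_rfl
  have phase2 : ∀ t, T ≤ t → t ≤ 10*v+2 →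
      (ps.cfgs t).played k ≤ 1 ∧ q ∉ (ps.cfgs t).hand ∧ q ∉ (ps.cfgs t).done := by
    intro t hTt
    induction t, hTt using Nat.le_induction with
    | base => intro _; exact ⟨by omega, hqh, hd0⟩
    | succ t hTt ih =>
      intro ht
      obtain ⟨h1, h2, h3⟩ := ih (by omega)
      exact step_le_one hu2 (ps.step t (by rw [sigma1_len]; omega)) (by omega) h1 h2 h3
  have hfin' : (ps.cfgs (10*v+2)).played k ≤ 1 :=
    (phase2 (10*v+2) (by omega) le_rfl).1
  rw [PlaySeq.final, sigma1_len] at hfin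
  omega

end Run

/-- For every `1 ≤ i ≤ v`, no play sequence of `σ₁` with hand size 2
plays all three of: the value-2 card of color `2i-1`, the value-2 card of color `2i`,
and the value-2 card of the dummy color `2v+1`. -/
theorem sigma1_not_all_three_twos
    (v : ℕ) (hv : 1 ≤ v) (i : ℕ) (hi1 : 1 ≤ i) (hiv : i ≤ v)
    (ps : PlaySeq (sigma1 v) 2 Config.initial) :
    ¬ (2 ≤ ps.final.played (2*i-1) ∧ 2 ≤ ps.final.played (2*i) ∧
        2 ≤ ps.final.played (2*v+1)) := by
  rintro ⟨ha, hb, hc⟩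
  set T := 10*(i-1)+3 with hT
  have m0 : 0 ∈ (ps.cfgs T).hand :=
    key ps (2*v+1) 0 (10*v+1) T (nth_zero v) (fun j h => uniq_1dummy h)
      (fun j h => uniq_2dummy h) (by omega) (by omega) (by omega) hc
  have m1 : 10*(i-1)+1 ∈ (ps.cfgs T).hand :=
    key ps (2*i-1) (10*(i-1)+1) (10*(i-1)+3) T (card_q1 hi1 hiv)
      (fun j h => uniq_1odd hi1 hiv h) (fun j h => uniq_2odd hi1 hiv h)
      (by omega) (by omega) (by omega) ha
  have m2 : 10*(i-1)+2 ∈ (ps.cfgs T).hand :=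
    key ps (2*i) (10*(i-1)+2) (10*(i-1)+7) T (card_q2 hi1 hiv)
      (fun j h => uniq_1even hi1 hiv h) (fun j h => uniq_2even hi1 h)
      (by omega) (by omega) (by omega) hb
  have hcard := run_card ps T (by omega)
  have hsub : ({0, 10*(i-1)+1, 10*(i-1)+2} : Finset ℕ) ⊆ (ps.cfgs T).hand := by
    intro x hx
    simp only [Finset.mem_insert, Finset.mem_singleton] at hx
    rcases hx with rfl | rfl | rfl <;> assumption
  have h3 : ({0, 10*(i-1)+1, 10*(i-1)+2} : Finset ℕ).card = 3 := by
    rw [Finset.card_insert_of_notMem (by simp), Finset.card_insert_of_notMem (by simp),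
      Finset.card_singleton]
  have := Finset.card_le_card hsub
  omega
end
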